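/- arXiv:math/0604114 — 9 statements merged into one kernel-verified Lean document; each statement's English description precedes it below -/
import Mathlib

section
/- Every nonzero separable C*-algebra admits a faithful state: if A is a (not necessarily unital) complex C*-algebra that is nonzero and separable as a topological space, then there exists a continuous linear functional τ : A → ℂ with ‖τ‖ = 1 such that for every a ∈ A the value τ(a* ⬝ a) is a nonnegative real number, and τ(a* ⬝ a) = 0 implies a = 0. -/
set_option maxHeartbeats 800000

open Unitization in
lemma exists_state_aux {A : Type*} [NonUnitalCStarAlgebra A] (a : A) (ha : a ≠ 0) :
    ∃ φ : A →L[ℂ] ℂ, ‖φ‖ ≤ 1 ∧ (∀ b : A, ∃ r : ℝ, 0 ≤ r ∧ φ (star b * b) = (r : ℂ)) ∧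
      φ (star a * a) = ((‖a‖^2 : ℝ) : ℂ) := by
  letI : PartialOrder (Unitization ℂ A) := CStarAlgebra.spectralOrder _
  letI : StarOrderedRing (Unitization ℂ A) := CStarAlgebra.spectralOrderedRing _
  set x : Unitization ℂ A := (↑(star a * a) : Unitization ℂ A) with hxdef
  have hxnn : (0:Unitization ℂ A) ≤ x := by
    rw [hxdef, Unitization.inr_mul ℂ, Unitization.inr_star]
    exact star_mul_self_nonneg ((a : Unitization ℂ A))
  have hxnorm : ‖x‖ = ‖a‖^2 := by
    rw [hxdef, Unitization.norm_inr, CStarRing.norm_star_mul_self, sq]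
  have hsaa : star a * a ≠ 0 := by
    intro h
    apply ha
    have : ‖a‖^2 = 0 := by rw [sq, ← CStarRing.norm_star_mul_self, h, norm_zero]
    simpa [pow_eq_zero_iff] using this
  -- the family
  set v : Fin 2 → Unitization ℂ A := ![1, x] with hv
  have hli : LinearIndependent ℂ v := by
    rw [hv, LinearIndependent.pair_iff]
    intro s t hst
    have hs : s = 0 := by
      have := congrArg (fun z : Unitization ℂ A => z.fst) hst
      simpa [hxdef] using this
    have ht' : t • (star a * a) = 0 := by
      have := congrArg (fun z : Unitization ℂ A => z.snd) hst
      simpa [hxdef] using this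
    rcases smul_eq_zero.mp ht' with h | h
    · exact ⟨hs, h⟩
    · exact absurd h hsaa
  -- the spectral bound
  have key : ∀ s t : ℂ, ‖s + t * (‖x‖:ℂ)‖ ≤ ‖s • (1 : Unitization ℂ A) + t • x‖ := by
    intro s t
    have hmem : s + t * (‖x‖:ℂ) ∈ spectrum ℂ (s • (1 : Unitization ℂ A) + t • x) := by
      rcases eq_or_ne t 0 with rfl | ht
      · simp only [zero_mul, add_zero, zero_smul, add_zero]
        rw [← Algebra.algebraMap_eq_smul_one]
        rw [spectrum.scalar_eq]
        exact Set.mem_singleton s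
      · have h1 : ((‖x‖:ℝ):ℂ) ∈ spectrum ℂ x :=
          spectrum.algebraMap_mem ℂ (CStarAlgebra.norm_mem_spectrum_of_nonneg hxnn)
        have h2 : t * (‖x‖:ℂ) ∈ spectrum ℂ (t • x) := by
          have := spectrum.unit_smul_eq_smul (R := ℂ) x (Units.mk0 t ht)
          rw [show (Units.mk0 t ht) • x = t • x from rfl] at this
          rw [this]
          exact ⟨_, h1, by simp [Units.smul_def]⟩
        have h3 := spectrum.singleton_add_eq (R := ℂ) (t • x) s
        rw [← Algebra.algebraMap_eq_smul_one, ← h3]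
        exact Set.add_mem_add rfl h2
    exact spectrum.norm_le_norm_of_mem hmem
  -- basis and functional on the span
  let p : Submodule ℂ (Unitization ℂ A) := Submodule.span ℂ (Set.range v)
  let bas : Module.Basis (Fin 2) ℂ p := Module.Basis.span hli
  let f₀ : p →ₗ[ℂ] ℂ := bas.constr ℂ ![1, (‖x‖:ℂ)]
  have hbas0 : ((bas 0 : p) : Unitization ℂ A) = 1 := by
    rw [show (bas 0) = Module.Basis.span hli 0 from rfl, Module.Basis.span_apply]; rfl
  have hbas1 : ((bas 1 : p) : Unitization ℂ A) = x := by
    rw [show (bas 1) = Module.Basis.span hli 1 from rfl, Module.Basis.span_apply]; rfl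
  have hf₀0 : f₀ (bas 0) = 1 := by
    rw [show f₀ (bas 0) = (bas.constr ℂ ![1, (‖x‖:ℂ)]) (bas 0) from rfl, Module.Basis.constr_basis]; rfl
  have hf₀1 : f₀ (bas 1) = (‖x‖:ℂ) := by
    rw [show f₀ (bas 1) = (bas.constr ℂ ![1, (‖x‖:ℂ)]) (bas 1) from rfl, Module.Basis.constr_basis]; rfl
  have hbound : ∀ y : p, ‖f₀ y‖ ≤ 1 * ‖y‖ := by
    intro y
    obtain ⟨c, hc⟩ := (Submodule.mem_span_range_iff_exists_fun ℂ).mp y.2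
    have hy' : y = c 0 • bas 0 + c 1 • bas 1 := by
      apply Subtype.ext
      push_cast [hbas0, hbas1]
      rw [← hc, Fin.sum_univ_two]
      simp [hv]
    have hfy : f₀ y = c 0 + c 1 * (‖x‖:ℂ) := by
      rw [hy', map_add, map_smul, map_smul, hf₀0, hf₀1]
      simp [smul_eq_mul]
    have hny : (y : Unitization ℂ A) = c 0 • (1 : Unitization ℂ A) + c 1 • x := by
      rw [hy']; push_cast [hbas0, hbas1]; rfl
    rw [hfy, show ‖y‖ = ‖(y : Unitization ℂ A)‖ from rfl, hny, one_mul]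
    exact key (c 0) (c 1)
  let f : p →L[ℂ] ℂ := f₀.mkContinuous 1 hbound
  obtain ⟨g, hgext, hgnorm⟩ := exists_extension_norm_eq p f
  have hgle : ‖g‖ ≤ 1 := by
    rw [hgnorm]; exact f₀.mkContinuous_norm_le zero_le_one hbound
  have hg1 : g 1 = 1 := by
    have := hgext (bas 0)
    rw [hbas0] at this
    rw [this, show f (bas 0) = f₀ (bas 0) from rfl, hf₀0]
  have hgx : g x = (‖x‖:ℂ) := by
    have := hgext (bas 1)
    rw [hbas1] at this
    rw [this, show f (bas 1) = f₀ (bas 1) from rfl, hf₀1]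
  -- g is real on selfadjoint elements
  have him : ∀ y : Unitization ℂ A, IsSelfAdjoint y → (g y).im = 0 := by
    intro y hy
    by_contra himne
    have hbound : ∀ s : ℝ, ((g y).im)^2 + 2*(g y).im*s ≤ ‖y‖^2 := by
      intro s
      set w : ℂ := (s:ℂ) * Complex.I with hw
      set z : Unitization ℂ A := y + w • 1 with hz
      have hstar : star z = y - w • 1 := by
        rw [hz, star_add, hy.star_eq, star_smul, star_one]
        rw [show star w = -w by simp [hw, Complex.ext_iff]]
        rw [neg_smul, sub_eq_add_neg]
      have hmul : star z * z = y * y + ((s:ℂ)^2) • 1 := by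
        rw [hstar, hz]
        have e1 : (y - w • 1) * (y + w • 1) = y * y - (w * w) • 1 := by
          simp only [mul_add, sub_mul, mul_smul_comm, smul_mul_assoc, mul_one, one_mul, smul_smul]
          module
        rw [e1, show w * w = -((s:ℂ)^2) by rw [hw, mul_mul_mul_comm, Complex.I_mul_I]; ring]
        rw [neg_smul, sub_neg_eq_add]
      have hznorm : ‖z‖^2 ≤ ‖y‖^2 + s^2 := by
        rw [sq, ← CStarRing.norm_star_mul_self (x := z), hmul]
        have hns : ‖((s:ℂ)^2) • (1 : Unitization ℂ A)‖ = s^2 := by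
          rw [norm_smul, norm_one, mul_one, show ((s:ℂ)^2) = ((s^2 : ℝ) : ℂ) by push_cast; ring,
            Complex.norm_real, Real.norm_eq_abs, abs_of_nonneg (sq_nonneg s)]
        calc ‖y * y + ((s:ℂ)^2) • (1 : Unitization ℂ A)‖
            ≤ ‖y * y‖ + ‖((s:ℂ)^2) • (1 : Unitization ℂ A)‖ := norm_add_le _ _
          _ ≤ ‖y‖^2 + s^2 := by
              rw [hns]
              exact add_le_add (by rw [sq]; exact norm_mul_le y y) le_rfl
      have hgz : g z = g y + w := by
        rw [hz, map_add, map_smul, hg1, smul_eq_mul, mul_one]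
      have h1 : ‖g z‖ ≤ ‖z‖ := by
        calc ‖g z‖ ≤ ‖g‖ * ‖z‖ := g.le_opNorm z
          _ ≤ 1 * ‖z‖ := by gcongr
          _ = ‖z‖ := one_mul _
      have h2 : ‖g z‖^2 ≤ ‖y‖^2 + s^2 := by
        calc ‖g z‖^2 ≤ ‖z‖^2 := by gcongr
          _ ≤ ‖y‖^2 + s^2 := hznorm
      have h3 : ‖g z‖^2 = (g y).re^2 + ((g y).im + s)^2 := by
        rw [hgz, hw, ← Complex.normSq_eq_norm_sq]
        simp [Complex.normSq_apply, Complex.add_re, Complex.add_im]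
        ring
      nlinarith [sq_nonneg ((g y).re)]
    have hni : (2:ℝ)*(g y).im ≠ 0 := mul_ne_zero two_ne_zero himne
    have hs2 : 2*(g y).im * ((‖y‖^2 + 1)/(2*(g y).im)) = ‖y‖^2 + 1 := by
      field_simp
    have h := hbound ((‖y‖^2 + 1)/(2*(g y).im))
    rw [hs2] at h
    nlinarith [sq_nonneg ((g y).im)]
  -- g is nonnegative on nonnegative elements
  have hpos : ∀ y : Unitization ℂ A, (0:Unitization ℂ A) ≤ y → ∃ r : ℝ, 0 ≤ r ∧ g y = (r : ℂ) := by
    intro y hy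
    have hsa : IsSelfAdjoint y := .of_nonneg hy
    have hgyr : g y = (((g y).re : ℝ) : ℂ) := by
      exact Complex.ext (by simp) (by simp [him y hsa])
    refine ⟨(g y).re, ?_, hgyr⟩
    set t : ℝ := ‖y‖ with htdef
    have hyle : y ≤ algebraMap ℝ (Unitization ℂ A) t :=
      (CStarAlgebra.norm_le_iff_le_algebraMap y (norm_nonneg y) hy).mp le_rfl
    set z : Unitization ℂ A := algebraMap ℝ (Unitization ℂ A) t - y with hzdef
    have hznn : (0:Unitization ℂ A) ≤ z := sub_nonneg.mpr hyle
    have hzle : z ≤ algebraMap ℝ (Unitization ℂ A) t := by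
      rw [hzdef]
      exact sub_le_self _ hy
    have hznorm : ‖z‖ ≤ t := (CStarAlgebra.norm_le_iff_le_algebraMap z (norm_nonneg y) hznn).mpr hzle
    have halg : algebraMap ℝ (Unitization ℂ A) t = ((t:ℂ)) • 1 := by
      rw [IsScalarTower.algebraMap_apply ℝ ℂ (Unitization ℂ A), Algebra.algebraMap_eq_smul_one]
      norm_num
    have hgz : g z = (t:ℂ) - g y := by
      rw [hzdef, map_sub, halg, map_smul, hg1, smul_eq_mul, mul_one]
    have h1 : ‖g z‖ ≤ t := by
      calc ‖g z‖ ≤ ‖g‖ * ‖z‖ := g.le_opNorm z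
        _ ≤ 1 * t := mul_le_mul hgle hznorm (norm_nonneg z) zero_le_one
        _ = t := one_mul t
    have h2 : |t - (g y).re| ≤ t := by
      have : g z = ((t - (g y).re : ℝ) : ℂ) := by
        rw [hgz]
        refine Complex.ext ?_ ?_ <;> simp [him y hsa]
      rw [this, Complex.norm_real, Real.norm_eq_abs] at h1
      exact h1
    linarith [abs_le.mp h2]
  -- the inclusion as a continuous linear map
  let ι : A →L[ℂ] Unitization ℂ A :=
    (Unitization.inrHom ℂ ℂ A).mkContinuous 1 (fun b => by
      rw [one_mul]
      exact (Unitization.norm_inr (𝕜 := ℂ) b).le)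
  have hι : ∀ b : A, ι b = (b : Unitization ℂ A) := fun b => rfl
  refine ⟨g.comp ι, ?_, ?_, ?_⟩
  · refine ContinuousLinearMap.opNorm_le_bound _ zero_le_one (fun b => ?_)
    rw [one_mul]
    have h1 : ‖g (ι b)‖ ≤ ‖g‖ * ‖b‖ := by
      have := g.le_opNorm (ι b)
      rwa [hι, Unitization.norm_inr] at this
    have h2 : ‖g‖ * ‖b‖ ≤ 1 * ‖b‖ := mul_le_mul_of_nonneg_right hgle (norm_nonneg b)
    exact le_trans (le_trans le_rfl h1) (by rw [one_mul] at h2; exact h2)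
  · intro b
    have : (↑(star b * b) : Unitization ℂ A) = star ((b : Unitization ℂ A)) * (b : Unitization ℂ A) := by
      rw [Unitization.inr_mul ℂ, Unitization.inr_star]
    have hnn : (0:Unitization ℂ A) ≤ (↑(star b * b) : Unitization ℂ A) := by
      rw [this]; exact star_mul_self_nonneg _
    simpa [hι] using hpos _ hnn
  · show g (ι (star a * a)) = _
    rw [hι, ← hxdef, hgx, hxnorm]

/-- Every nonzero separable (not necessarily unital) C*-algebra admits a faithful state:
there is a continuous linear functional `τ : A → ℂ` of norm one such that `τ (a* * a)` is a
nonnegative real number for every `a`, and `τ (a* * a) = 0` implies `a = 0`. -/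
theorem exists_faithful_state
    (A : Type*) [NonUnitalNormedRing A] [StarRing A] [CStarRing A]
    [NormedSpace ℂ A] [IsScalarTower ℂ A A] [SMulCommClass ℂ A A] [StarModule ℂ A]
    [CompleteSpace A] [TopologicalSpace.SeparableSpace A] [Nontrivial A] :
    ∃ τ : A →L[ℂ] ℂ, ‖τ‖ = 1 ∧
      (∀ a : A, ∃ r : ℝ, 0 ≤ r ∧ τ (star a * a) = (r : ℂ)) ∧
      (∀ a : A, τ (star a * a) = 0 → a = 0) := by
  letI : NonUnitalCStarAlgebra A := { }
  have hns : ∀ (k : ℂ) (f : A →L[ℂ] ℂ), ‖k • f‖ = ‖k‖ * ‖f‖ := fun k f => norm_smul k f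
  obtain ⟨u, hu⟩ := TopologicalSpace.exists_dense_seq A
  have hchoice : ∀ n : ℕ, ∃ φ : A →L[ℂ] ℂ, ‖φ‖ ≤ 1 ∧
      (∀ b : A, ∃ r : ℝ, 0 ≤ r ∧ φ (star b * b) = (r:ℂ)) ∧
      (u n ≠ 0 → φ (star (u n) * u n) = ((‖u n‖^2 : ℝ):ℂ)) := by
    intro n
    rcases eq_or_ne (u n) 0 with h | h
    · exact ⟨0, by simp, fun b => ⟨0, le_rfl, by simp⟩, fun h' => absurd h h'⟩
    · obtain ⟨φ, h1, h2, h3⟩ := exists_state_aux (u n) h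
      exact ⟨φ, h1, h2, fun _ => h3⟩
  choose φ hφ1 hφ2 hφ3 using hchoice
  choose r hr0 hreq using hφ2
  set c : ℕ → ℝ := fun n => (1/2)^(n+1) with hc
  have hc0 : ∀ n, 0 < c n := fun n => by rw [hc]; positivity
  have hcsum : Summable c := by
    rw [hc]
    exact (summable_geometric_of_lt_one (by norm_num) (by norm_num)).comp_injective
      (add_left_injective 1)
  have hsum : Summable (fun n => ((c n : ℂ)) • φ n) := by
    apply Summable.of_norm_bounded hcsum
    intro n
    rw [hns, Complex.norm_real, Real.norm_eq_abs, abs_of_pos (hc0 n)]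
    calc c n * ‖φ n‖ ≤ c n * 1 := mul_le_mul_of_nonneg_left (hφ1 n) (hc0 n).le
      _ = c n := mul_one _
  set τ₀ : A →L[ℂ] ℂ := ∑' n, ((c n : ℂ)) • φ n with hτ₀
  have happ : ∀ b : A, τ₀ b = ∑' n, (c n : ℂ) * (φ n b) := by
    intro b
    rw [hτ₀]
    have := (ContinuousLinearMap.apply ℂ ℂ b).map_tsum hsum
    simpa using this
  -- summability of coefficient series
  have hrsum : ∀ b : A, Summable (fun n => c n * r n b) := by
    intro b
    apply Summable.of_norm_bounded (g := fun n => c n * ‖star b * b‖)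
      (hcsum.mul_right _)
    intro n
    rw [Real.norm_eq_abs, abs_mul, abs_of_pos (hc0 n)]
    apply mul_le_mul_of_nonneg_left _ (hc0 n).le
    rw [abs_of_nonneg (hr0 n b)]
    have : ‖φ n (star b * b)‖ ≤ ‖φ n‖ * ‖star b * b‖ := (φ n).le_opNorm _
    rw [hreq n b, Complex.norm_real, Real.norm_eq_abs, abs_of_nonneg (hr0 n b)] at this
    calc r n b ≤ ‖φ n‖ * ‖star b * b‖ := this
      _ ≤ 1 * ‖star b * b‖ := mul_le_mul_of_nonneg_right (hφ1 n) (norm_nonneg _)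
      _ = ‖star b * b‖ := one_mul _
  have hval : ∀ b : A, τ₀ (star b * b) = ((∑' n, c n * r n b : ℝ) : ℂ) := by
    intro b
    rw [happ]
    have h1 : ∀ n, (c n : ℂ) * (φ n (star b * b)) = ((c n * r n b : ℝ) : ℂ) := by
      intro n
      rw [hreq n b]; push_cast; ring
    rw [tsum_congr h1]
    exact (Complex.ofRealCLM.map_tsum (hrsum b)).symm
  have hfaith : ∀ b : A, b ≠ 0 → τ₀ (star b * b) ≠ 0 := by
    intro b hb h0
    rw [hval b] at h0
    have hR : (∑' n, c n * r n b) = 0 := by exact_mod_cast h0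
    have hzero : ∀ n, r n b = 0 := by
      intro n
      have hle : c n * r n b ≤ ∑' m, c m * r m b :=
        Summable.le_tsum (hrsum b) n (fun m _ => mul_nonneg (hc0 m).le (hr0 m b))
      rw [hR] at hle
      have := mul_nonneg (hc0 n).le (hr0 n b)
      have hcr : c n * r n b = 0 := le_antisymm hle this
      rcases mul_eq_zero.mp hcr with h | h
      · exact absurd h (hc0 n).ne'
      · exact h
    -- density argument
    have hbpos : 0 < ‖b‖ := norm_pos_iff.mpr hb
    obtain ⟨n, hn⟩ := Metric.denseRange_iff.mp hu b (‖b‖/8) (by positivity)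
    rw [dist_eq_norm] at hn
    have hun : ‖b‖ - ‖b‖/8 ≤ ‖u n‖ := by
      have := norm_sub_norm_le b (u n)
      linarith
    have hunne : u n ≠ 0 := by
      intro h
      rw [h, norm_zero] at hun
      linarith
    have heq : φ n (star (u n) * u n) = ((‖u n‖^2 : ℝ):ℂ) := hφ3 n hunne
    have hφn0 : φ n (star b * b) = 0 := by
      rw [hreq n b, hzero n]; norm_num
    have hdiff : ‖u n‖^2 ≤ ‖star (u n) * u n - star b * b‖ := by
      have h1 : ((‖u n‖^2 : ℝ):ℂ) = φ n (star (u n) * u n) - φ n (star b * b) := by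
        rw [heq, hφn0, sub_zero]
      have h2 : ‖φ n (star (u n) * u n - star b * b)‖ ≤ ‖φ n‖ * ‖star (u n) * u n - star b * b‖ :=
        (φ n).le_opNorm _
      rw [map_sub, ← h1, Complex.norm_real, Real.norm_eq_abs, abs_of_nonneg (sq_nonneg _)] at h2
      calc ‖u n‖^2 ≤ ‖φ n‖ * ‖star (u n) * u n - star b * b‖ := h2
        _ ≤ 1 * ‖star (u n) * u n - star b * b‖ :=
            mul_le_mul_of_nonneg_right (hφ1 n) (norm_nonneg _)
        _ = _ := one_mul _
    have hsplit : ‖star (u n) * u n - star b * b‖ ≤ ‖b - u n‖ * (‖u n‖ + ‖b‖) := by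
      have e : star (u n) * u n - star b * b
          = star (u n) * (u n - b) + star (u n - b) * b := by
        rw [star_sub]; noncomm_ring
      rw [e]
      calc ‖star (u n) * (u n - b) + star (u n - b) * b‖
          ≤ ‖star (u n) * (u n - b)‖ + ‖star (u n - b) * b‖ := norm_add_le _ _
        _ ≤ ‖star (u n)‖ * ‖u n - b‖ + ‖star (u n - b)‖ * ‖b‖ :=
            add_le_add (norm_mul_le _ _) (norm_mul_le _ _)
        _ = ‖b - u n‖ * (‖u n‖ + ‖b‖) := by
            rw [norm_star, norm_star, ← norm_neg (u n - b), neg_sub]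
            ring
    nlinarith [hun, hn, hbpos, hdiff, hsplit, norm_nonneg (b - u n), norm_nonneg (u n)]
  -- normalize
  obtain ⟨b₀, hb₀⟩ := exists_ne (0 : A)
  have hτ₀ne : τ₀ ≠ 0 := by
    intro h
    exact hfaith b₀ hb₀ (by rw [h]; rfl)
  have hnpos : 0 < ‖τ₀‖ := norm_pos_iff.mpr hτ₀ne
  refine ⟨((‖τ₀‖⁻¹ : ℝ) : ℂ) • τ₀, ?_, ?_, ?_⟩
  · rw [hns, Complex.norm_real, Real.norm_eq_abs, abs_of_pos (by positivity)]
    exact inv_mul_cancel₀ hnpos.ne'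
  · intro a
    refine ⟨‖τ₀‖⁻¹ * (∑' n, c n * r n a), ?_, ?_⟩
    · exact mul_nonneg (by positivity) (tsum_nonneg (fun n => mul_nonneg (hc0 n).le (hr0 n a)))
    · rw [ContinuousLinearMap.smul_apply, hval a, smul_eq_mul]
      push_cast
      ring
  · intro a h0
    rw [ContinuousLinearMap.smul_apply, smul_eq_mul, mul_eq_zero] at h0
    rcases h0 with h | h
    · exfalso
      have : (‖τ₀‖⁻¹ : ℝ) = 0 := by exact_mod_cast h
      exact (by positivity : (0:ℝ) < ‖τ₀‖⁻¹).ne' this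
    · by_contra hne
      exact hfaith a hne h
end

section
/- Let A₁ be the 4×4 integer matrix with rows (1,1,0,1), (1,1,1,0), (0,1,1,1), (1,0,1,1), and let M = 1 − A₁ᵗ act on ℤ⁴ by matrix–vector multiplication. Then the quotient abelian group ℤ⁴ / M(ℤ⁴) is isomorphic to ℤ × ℤ, and the kernel of M in ℤ⁴ is isomorphic to ℤ × ℤ. -/
open Matrix

/-- The directed edge matrix of the first genus-2 dual graph. -/
def A₁ : Matrix (Fin 4) (Fin 4) ℤ :=
  !![1, 1, 0, 1;
     1, 1, 1, 0;
     0, 1, 1, 1;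
     1, 0, 1, 1]

/-- K-theory computation for the first genus-2 graph: with `M = 1 − A₁ᵗ` acting on `ℤ⁴`,
the cokernel `ℤ⁴/M(ℤ⁴)` and the kernel of `M` are both isomorphic to `ℤ × ℤ`. -/
theorem ktheory_A₁ :
    Nonempty (((Fin 4 → ℤ) ⧸ LinearMap.range (Matrix.mulVecLin (1 - A₁ᵀ))) ≃ₗ[ℤ] ℤ × ℤ) ∧
    Nonempty ((LinearMap.ker (Matrix.mulVecLin (1 - A₁ᵀ))) ≃ₗ[ℤ] ℤ × ℤ) := by
  have hA : A₁ᵀ = A₁ := by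
    ext i j
    fin_cases i <;> fin_cases j <;> rfl
  have hM : ∀ x : Fin 4 → ℤ, Matrix.mulVecLin (1 - A₁ᵀ) x =
      ![-(x 1) - x 3, -(x 0) - x 2, -(x 1) - x 3, -(x 0) - x 2] := by
    intro x
    funext i
    rw [hA]
    fin_cases i <;>
      simp [Matrix.mulVecLin, Matrix.mulVec, dotProduct, Fin.sum_univ_four, A₁,
        Matrix.one_apply] <;> ring
  constructor
  · -- cokernel
    let f : (Fin 4 → ℤ) →ₗ[ℤ] ℤ × ℤ :=
      { toFun := fun x => (x 0 - x 2, x 1 - x 3)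
        map_add' := by intro x y; simp; constructor <;> ring
        map_smul' := by intro c x; simp; constructor <;> ring }
    have hsurj : Function.Surjective f := by
      rintro ⟨a, b⟩
      exact ⟨![a, b, 0, 0], by simp [f]⟩
    have hker : LinearMap.range (Matrix.mulVecLin (1 - A₁ᵀ)) = LinearMap.ker f := by
      ext x
      simp only [LinearMap.mem_range, LinearMap.mem_ker]
      constructor
      · rintro ⟨y, rfl⟩
        rw [hM]
        simp [f]
      · intro hx
        have h0 : x 0 - x 2 = 0 := congrArg Prod.fst hx
        have h1 : x 1 - x 3 = 0 := congrArg Prod.snd hx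
        refine ⟨![-(x 1), -(x 0), 0, 0], ?_⟩
        rw [hM]
        funext i
        fin_cases i <;> simp <;> omega
    exact ⟨(Submodule.quotEquivOfEq _ _ hker).trans (f.quotKerEquivOfSurjective hsurj)⟩
  · -- kernel
    let g : (LinearMap.ker (Matrix.mulVecLin (1 - A₁ᵀ))) →ₗ[ℤ] ℤ × ℤ :=
      ((LinearMap.proj 0).prod (LinearMap.proj 1)).comp (Submodule.subtype _)
    have hbij : Function.Bijective g := by
      constructor
      · rintro ⟨x, hx⟩ ⟨y, hy⟩ h
        simp only [LinearMap.mem_ker] at hx hy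
        rw [hM] at hx hy
        have hx1 := congrFun hx 0
        have hx2 := congrFun hx 1
        have hy1 := congrFun hy 0
        have hy2 := congrFun hy 1
        simp at hx1 hx2 hy1 hy2
        have h0 : x 0 = y 0 := congrArg Prod.fst h
        have h1 : x 1 = y 1 := congrArg Prod.snd h
        ext i
        fin_cases i <;> simp_all <;> omega
      · rintro ⟨a, b⟩
        refine ⟨⟨![a, b, -a, -b], ?_⟩, ?_⟩
        · simp only [LinearMap.mem_ker]
          rw [hM]
          funext i
          fin_cases i <;> simp
        · simp [g]
    exact ⟨LinearEquiv.ofBijective g hbij⟩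
end

section
/- Let A₂ be the 6×6 integer matrix with rows (0,1,0,0,0,1), (1,0,1,0,0,0), (0,1,0,1,0,0), (0,0,1,0,1,0), (0,0,0,1,0,1), (1,0,0,0,1,0), and let M = 1 − A₂ᵗ act on ℤ⁶ by matrix–vector multiplication. Then the quotient abelian group ℤ⁶ / M(ℤ⁶) is isomorphic to ℤ × ℤ, and the kernel of M in ℤ⁶ is isomorphic to ℤ × ℤ. -/
open Matrix

/-- The directed edge matrix of the second genus-2 dual graph (the theta graph). -/
def A₂ : Matrix (Fin 6) (Fin 6) ℤ :=
  !![0, 1, 0, 0, 0, 1;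
     1, 0, 1, 0, 0, 0;
     0, 1, 0, 1, 0, 0;
     0, 0, 1, 0, 1, 0;
     0, 0, 0, 1, 0, 1;
     1, 0, 0, 0, 1, 0]

lemma hM : (1 - A₂ᵀ : Matrix (Fin 6) (Fin 6) ℤ) =
    !![1,-1,0,0,0,-1; -1,1,-1,0,0,0; 0,-1,1,-1,0,0; 0,0,-1,1,-1,0; 0,0,0,-1,1,-1; -1,0,0,0,-1,1] := by
  decide

lemma cv5 {α : Type*} (a b c d e f : α) : ![a,b,c,d,e,f] 5 = f := rfl

lemma mulVec_M (x : Fin 6 → ℤ) :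
    (1 - A₂ᵀ).mulVec x =
      ![x 0 - x 1 - x 5, x 1 - x 0 - x 2, x 2 - x 1 - x 3,
        x 3 - x 2 - x 4, x 4 - x 3 - x 5, x 5 - x 0 - x 4] := by
  rw [hM]
  funext i
  fin_cases i
  · show ![(1:ℤ),-1,0,0,0,-1] ⬝ᵥ x = _
    simp [dotProduct, Fin.sum_univ_six, cv5]; ring
  · show ![(-1:ℤ),1,-1,0,0,0] ⬝ᵥ x = _
    simp [dotProduct, Fin.sum_univ_six, cv5]; ring
  · show ![(0:ℤ),-1,1,-1,0,0] ⬝ᵥ x = _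
    simp [dotProduct, Fin.sum_univ_six, cv5]; ring
  · show ![(0:ℤ),0,-1,1,-1,0] ⬝ᵥ x = _
    simp [dotProduct, Fin.sum_univ_six, cv5]; ring
  · show ![(0:ℤ),0,0,-1,1,-1] ⬝ᵥ x = _
    simp [dotProduct, Fin.sum_univ_six, cv5]; ring
  · show ![(-1:ℤ),0,0,0,-1,1] ⬝ᵥ x = ![x 0 - x 1 - x 5, x 1 - x 0 - x 2, x 2 - x 1 - x 3,
        x 3 - x 2 - x 4, x 4 - x 3 - x 5, x 5 - x 0 - x 4] 5
    show _ = x 5 - x 0 - x 4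
    simp [dotProduct, Fin.sum_univ_six, cv5]; ring

/-- The pair of linear functionals cutting out the range of `1 - A₂ᵀ`. -/
def ψ : (Fin 6 → ℤ) →ₗ[ℤ] ℤ × ℤ where
  toFun x := (x 0 - x 2 - x 3 + x 5, x 1 + x 2 - x 4 - x 5)
  map_add' x y := by
    simp only [Pi.add_apply, Prod.mk_add_mk, Prod.mk.injEq]
    constructor <;> ring
  map_smul' c x := by
    simp only [Pi.smul_apply, smul_eq_mul, RingHom.id_apply, Prod.smul_mk, Prod.mk.injEq]
    constructor <;> ring

lemma range_eq : LinearMap.range (Matrix.mulVecLin (1 - A₂ᵀ)) = LinearMap.ker ψ := by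
  ext y
  constructor
  · rintro ⟨x, rfl⟩
    simp only [LinearMap.mem_ker, Matrix.mulVecLin_apply, mulVec_M, ψ, LinearMap.coe_mk,
      AddHom.coe_mk, Prod.mk_eq_zero]
    constructor <;> · simp [cv5] <;> ring
  · intro hy
    simp only [LinearMap.mem_ker, ψ, LinearMap.coe_mk, AddHom.coe_mk, Prod.mk_eq_zero] at hy
    obtain ⟨h1, h2⟩ := hy
    refine ⟨![y 0 - y 2 - y 3, -y 2 - y 3, -y 0 - y 1, -y 0 - y 1 + y 3, 0, 0], ?_⟩
    rw [Matrix.mulVecLin_apply, mulVec_M]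
    funext i
    fin_cases i <;> · simp [cv5] <;> linarith

lemma ψ_surj : Function.Surjective ψ := by
  rintro ⟨a, b⟩
  exact ⟨![a, b, 0, 0, 0, 0], by simp [ψ, cv5]⟩

/-- K-theory computation for the second genus-2 graph: with `M = 1 − A₂ᵗ` acting on `ℤ⁶`,
the cokernel `ℤ⁶/M(ℤ⁶)` and the kernel of `M` are both isomorphic to `ℤ × ℤ`. -/
theorem ktheory_A₂ :
    Nonempty (((Fin 6 → ℤ) ⧸ LinearMap.range (Matrix.mulVecLin (1 - A₂ᵀ))) ≃ₗ[ℤ] ℤ × ℤ) ∧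
    Nonempty ((LinearMap.ker (Matrix.mulVecLin (1 - A₂ᵀ))) ≃ₗ[ℤ] ℤ × ℤ) := by
  constructor
  · exact ⟨range_eq ▸ ψ.quotKerEquivOfSurjective ψ_surj⟩
  · refine ⟨{
      toFun := fun x => (x.1 0, x.1 1)
      invFun := fun p => ⟨![p.1, p.2, p.2 - p.1, -p.1, -p.2, p.1 - p.2], by
        rw [LinearMap.mem_ker, Matrix.mulVecLin_apply, mulVec_M]
        funext i
        fin_cases i <;> · simp [cv5] <;> ring⟩
      map_add' := fun x y => by simp
      map_smul' := fun c x => by simp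
      left_inv := fun x => by
        obtain ⟨v, hv⟩ := x
        rw [LinearMap.mem_ker, Matrix.mulVecLin_apply, mulVec_M] at hv
        have e0 := congrFun hv 0
        have e1 := congrFun hv 1
        have e2 := congrFun hv 2
        have e3 := congrFun hv 3
        simp [cv5] at e0 e1 e2 e3
        ext i
        fin_cases i <;> · simp [cv5] <;> linarith
      right_inv := fun p => by simp }⟩
end

section
/- Let A₃ be the 6×6 integer matrix with rows (0,0,1,0,0,1), (1,1,0,0,0,0), (0,0,1,1,0,0), (0,1,0,0,1,0), (1,0,0,0,1,0), (0,0,0,1,0,1), and let M = 1 − A₃ᵗ act on ℤ⁶ by matrix–vector multiplication. Then the quotient abelian group ℤ⁶ / M(ℤ⁶) is isomorphic to ℤ × ℤ, and the kernel of M in ℤ⁶ is isomorphic to ℤ × ℤ. -/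
open Matrix

/-- The directed edge matrix of the third genus-2 dual graph. -/
def A₃ : Matrix (Fin 6) (Fin 6) ℤ :=
  !![0, 0, 1, 0, 0, 1;
     1, 1, 0, 0, 0, 0;
     0, 0, 1, 1, 0, 0;
     0, 1, 0, 0, 1, 0;
     1, 0, 0, 0, 1, 0;
     0, 0, 0, 1, 0, 1]

@[simp] lemma cons_val_five' {α : Type*} (x : α) (u : Fin 5 → α) :
    Matrix.vecCons x u 5 = u 4 := rfl

/-- `1 - A₃ᵀ`, written out explicitly. -/
def M₃ : Matrix (Fin 6) (Fin 6) ℤ :=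
  !![1, -1, 0, 0, -1, 0;
     0, 0, 0, -1, 0, 0;
     -1, 0, 0, 0, 0, 0;
     0, 0, -1, 1, 0, -1;
     0, 0, 0, -1, 0, 0;
     -1, 0, 0, 0, 0, 0]

lemma hM₃ : (1 - A₃ᵀ) = M₃ := by decide

/-- The test map whose kernel is the range of `M₃`. -/
def f₃ : (Fin 6 → ℤ) →ₗ[ℤ] ℤ × ℤ where
  toFun v := (v 1 - v 4, v 2 - v 5)
  map_add' v w := by simp [Prod.ext_iff]; constructor <;> ring
  map_smul' c v := by simp [Prod.ext_iff]; constructor <;> ring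

lemma mulVec_eq₃ (w : Fin 6 → ℤ) :
    M₃.mulVec w = ![w 0 - w 1 - w 4, -w 3, -w 0, -w 2 + w 3 - w 5, -w 3, -w 0] := by
  funext i
  fin_cases i <;>
    simp [M₃, Matrix.mulVec, dotProduct, Fin.sum_univ_six] <;> ring

lemma range_eq₃ : LinearMap.range (Matrix.mulVecLin M₃) = LinearMap.ker f₃ := by
  ext v
  constructor
  · rintro ⟨w, rfl⟩
    simp [f₃, LinearMap.mem_ker, Matrix.mulVecLin_apply, mulVec_eq₃, Prod.ext_iff]
  · intro hv
    have h1 : v 1 - v 4 = 0 := congrArg Prod.fst hv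
    have h2 : v 2 - v 5 = 0 := congrArg Prod.snd hv
    refine ⟨![-v 2, -v 2 - v 0, -v 1 - v 3, -v 1, 0, 0], ?_⟩
    rw [Matrix.mulVecLin_apply, mulVec_eq₃]
    funext i
    fin_cases i <;> simp <;> linarith

/-- Parametrization of the kernel. -/
def g₃ : (ℤ × ℤ) →ₗ[ℤ] (Fin 6 → ℤ) where
  toFun p := ![0, p.1, p.2, 0, -p.1, -p.2]
  map_add' p q := by
    funext i; fin_cases i <;> simp [Prod.fst_add, Prod.snd_add] <;> ring
  map_smul' c p := by
    funext i; fin_cases i <;> simp [Prod.smul_fst, Prod.smul_snd, smul_eq_mul] <;> ring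

lemma g₃_mem (p : ℤ × ℤ) : g₃ p ∈ LinearMap.ker (Matrix.mulVecLin M₃) := by
  rw [LinearMap.mem_ker, Matrix.mulVecLin_apply, g₃, LinearMap.coe_mk, AddHom.coe_mk,
    mulVec_eq₃]
  funext i; fin_cases i <;> simp

/-- Kernel → ℤ × ℤ. -/
def h₃ : (LinearMap.ker (Matrix.mulVecLin M₃)) →ₗ[ℤ] ℤ × ℤ :=
  LinearMap.prod
    ((LinearMap.proj 1).comp (Submodule.subtype _))
    ((LinearMap.proj 2).comp (Submodule.subtype _))

def kerEquiv₃ : (LinearMap.ker (Matrix.mulVecLin M₃)) ≃ₗ[ℤ] ℤ × ℤ :=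
  LinearEquiv.ofLinear h₃ (g₃.codRestrict _ g₃_mem)
    (by ext p <;> rfl)
    (by
      refine LinearMap.ext fun v => Subtype.ext ?_
      have hv := v.2
      rw [LinearMap.mem_ker, Matrix.mulVecLin_apply, mulVec_eq₃] at hv
      have h0 := congrFun hv 0
      have h1 := congrFun hv 1
      have h2 := congrFun hv 2
      have h3 := congrFun hv 3
      simp at h0 h1 h2 h3
      funext i
      show (![0, v.1 1, v.1 2, 0, -(v.1 1), -(v.1 2)] : Fin 6 → ℤ) i = v.1 i
      fin_cases i <;> simp <;> linarith)

/-- K-theory computation for the third genus-2 graph: with `M = 1 − A₃ᵗ` acting on `ℤ⁶`,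
the cokernel `ℤ⁶/M(ℤ⁶)` and the kernel of `M` are both isomorphic to `ℤ × ℤ`. -/
theorem ktheory_A₃ :
    Nonempty (((Fin 6 → ℤ) ⧸ LinearMap.range (Matrix.mulVecLin (1 - A₃ᵀ))) ≃ₗ[ℤ] ℤ × ℤ) ∧
    Nonempty ((LinearMap.ker (Matrix.mulVecLin (1 - A₃ᵀ))) ≃ₗ[ℤ] ℤ × ℤ) := by
  rw [hM₃]
  constructor
  · have hsurj : Function.Surjective f₃ := by
      intro p
      exact ⟨![0, p.1, p.2, 0, 0, 0], by simp [f₃]⟩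
    exact ⟨(Submodule.quotEquivOfEq _ _ range_eq₃).trans
      (f₃.quotKerEquivOfSurjective hsurj)⟩
  · exact ⟨kerEquiv₃⟩
end

section
/- Let p and q be real numbers with p > 0 and q > 2/p. Let d : ℕ → ℕ be strictly increasing on n ≥ 1 with d(1) ≥ 1, and let λ : ℕ → ℝ satisfy |λ(n)| ≥ d(n)^q for all n ≥ 1 (real power). Then the series ∑_{n ≥ 1} (1 + λ(n)²)^(−p/2) · d(n) converges. -/
/-- The summability estimate for the `p`-summable spectral triple on an AF algebra:
if `p > 0`, `q > 2/p`, `d : ℕ → ℕ` is strictly increasing on `n ≥ 1` with `d 1 ≥ 1`,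
and `|λ n| ≥ (d n)^q` for `n ≥ 1`, then `∑_{n ≥ 1} (1 + λ(n)²)^(−p/2) · d(n)` converges. -/
theorem af_summability (p q : ℝ) (hp : 0 < p) (hq : 2 / p < q)
    (d : ℕ → ℕ) (hd : StrictMonoOn d (Set.Ici 1)) (hd1 : 1 ≤ d 1)
    (lam : ℕ → ℝ) (hlam : ∀ n, 1 ≤ n → ((d n : ℝ)) ^ q ≤ |lam n|) :
    Summable (fun n : ℕ => (1 + lam (n + 1) ^ 2) ^ (-(p / 2)) * (d (n + 1) : ℝ)) := by
  have hpq : 2 < q * p := (div_lt_iff₀ hp).mp hq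
  have hdge : ∀ n : ℕ, n + 1 ≤ d (n + 1) := by
    intro n
    induction n with
    | zero => simpa using hd1
    | succ k ih =>
      have := hd (Set.mem_Ici.mpr (Nat.le_add_left 1 k)) (Set.mem_Ici.mpr (by omega))
        (show k + 1 < k + 1 + 1 by omega)
      omega
  have key : ∀ n : ℕ, (1 + lam (n + 1) ^ 2) ^ (-(p / 2)) * (d (n + 1) : ℝ)
      ≤ ((n + 1 : ℕ) : ℝ) ^ (1 - q * p) := by
    intro n
    set D : ℝ := (d (n + 1) : ℝ) with hD
    have hDn : ((n + 1 : ℕ) : ℝ) ≤ D := Nat.cast_le.mpr (hdge n)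
    have hD1 : (1 : ℝ) ≤ D := le_trans (by exact_mod_cast Nat.succ_le_succ (Nat.zero_le n)) hDn
    have hD0 : (0 : ℝ) < D := lt_of_lt_of_le one_pos hD1
    have hlam' := hlam (n + 1) (Nat.le_add_left 1 n)
    have h1 : D ^ (q * 2) ≤ 1 + lam (n + 1) ^ 2 := by
      have : D ^ (q * 2) = (D ^ q) ^ 2 := by
        rw [Real.rpow_mul hD0.le, Real.rpow_two]
      rw [this]
      have h2 : (D ^ q) ^ 2 ≤ |lam (n + 1)| ^ 2 := by
        apply sq_le_sq' _ hlam'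
        have : (0 : ℝ) ≤ D ^ q := (Real.rpow_pos_of_pos hD0 q).le
        nlinarith [abs_nonneg (lam (n + 1))]
      calc (D ^ q) ^ 2 ≤ |lam (n + 1)| ^ 2 := h2
        _ = lam (n + 1) ^ 2 := sq_abs _
        _ ≤ 1 + lam (n + 1) ^ 2 := by linarith
    have h3 : (1 + lam (n + 1) ^ 2) ^ (-(p / 2)) ≤ (D ^ (q * 2)) ^ (-(p / 2)) :=
      Real.rpow_le_rpow_of_nonpos (Real.rpow_pos_of_pos hD0 _) h1
        (by positivity |> neg_nonpos_of_nonneg)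
    have h4 : (D ^ (q * 2)) ^ (-(p / 2)) = D ^ (-(q * p)) := by
      rw [← Real.rpow_mul hD0.le]
      congr 1; ring
    calc (1 + lam (n + 1) ^ 2) ^ (-(p / 2)) * D
        ≤ D ^ (-(q * p)) * D := by
          apply mul_le_mul_of_nonneg_right _ hD0.le
          rw [← h4]; exact h3
      _ = D ^ (1 - q * p) := by
          rw [show (1 - q * p) = -(q * p) + 1 by ring, Real.rpow_add hD0, Real.rpow_one]
      _ ≤ ((n + 1 : ℕ) : ℝ) ^ (1 - q * p) := by
          apply Real.rpow_le_rpow_of_nonpos (by positivity) hDn (by linarith)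
  have hsum : Summable (fun n : ℕ => ((n + 1 : ℕ) : ℝ) ^ (1 - q * p)) := by
    have := Real.summable_nat_rpow.mpr (show 1 - q * p < -1 by linarith)
    exact (summable_nat_add_iff 1).mpr this
  apply Summable.of_nonneg_of_le _ key hsum
  intro n
  have : (0:ℝ) < 1 + lam (n+1)^2 := by positivity
  positivity
end

section
/- Let H be a complex Hilbert space and (Pₙ)_{n ≥ 0} a sequence of orthogonal projections on H with Pₙ ∘ Pₘ = P_{min(n,m)} for all n, m. For x in the range of P_N define D x = ∑_{n=0}^{N} n · (Pₙ − P_{n−1}) x (convention P_{−1} = 0); this is independent of the choice of N with x ∈ range P_N. Let S : H →L[ℂ] H be a bounded operator and k₀ ∈ ℕ such that P_k ∘ S = S ∘ P_{k+1} for every k ≥ k₀. Then: (i) for every m ≥ k₀, S maps the range of P_{m+1} into the range of P_m; and (ii) for every N and every x in the range of P_N, one has ‖D(S x) − S(D x)‖ ≤ (2·k₀ + 1) · ‖S‖ · ‖x‖. -/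
open Finset

/-- The grading operator `D x = ∑_{n=0}^{N} n (Pₙ − P_{n−1}) x` (convention `P_{−1} = 0`)
associated to an increasing family of projections, computed using the cutoff `N`. -/
noncomputable def gradingD {H : Type*} [NormedAddCommGroup H] [InnerProductSpace ℂ H]
    (P : ℕ → H →L[ℂ] H) (N : ℕ) (x : H) : H :=
  ∑ n ∈ Finset.range (N + 1),
    (n : ℂ) • (P n x - if n = 0 then 0 else P (n - 1) x)

section Aux

variable {H : Type*} [NormedAddCommGroup H] [InnerProductSpace ℂ H]

lemma gradingD_eq_aux (P : ℕ → H →L[ℂ] H) (N : ℕ) (x : H) :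
    gradingD P N x = (N : ℂ) • P N x - ∑ n ∈ Finset.range N, P n x := by
  induction N with
  | zero => simp [gradingD]
  | succ N ih =>
    rw [gradingD, Finset.sum_range_succ, ← gradingD, ih, if_neg (Nat.succ_ne_zero N),
      Nat.succ_sub_one, Finset.sum_range_succ]
    push_cast
    module

lemma proj_norm_le (P : ℕ → H →L[ℂ] H)
    (hcomp : ∀ n m : ℕ, (P n).comp (P m) = P (min n m))
    (hsa : ∀ (n : ℕ) (x y : H), (inner ℂ (P n x) y : ℂ) = inner ℂ x (P n y))
    (n : ℕ) (x : H) : ‖P n x‖ ≤ ‖x‖ := by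
  have hidem : P n (P n x) = P n x := by
    have := ContinuousLinearMap.ext_iff.mp (hcomp n n) x
    simpa using this
  have h1 : (inner ℂ (P n x) (P n x) : ℂ) = inner ℂ x (P n x) := by
    rw [hsa n x (P n x), hidem]
  have h2 : ‖P n x‖ ^ 2 = RCLike.re (inner ℂ x (P n x) : ℂ) := by
    rw [← h1, inner_self_eq_norm_sq]
  have h3 : RCLike.re (inner ℂ x (P n x) : ℂ) ≤ ‖x‖ * ‖P n x‖ :=
    re_inner_le_norm x (P n x)
  nlinarith [norm_nonneg (P n x), norm_nonneg x]

lemma proj_sub_norm_le (P : ℕ → H →L[ℂ] H)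
    (hcomp : ∀ n m : ℕ, (P n).comp (P m) = P (min n m))
    (hsa : ∀ (n : ℕ) (x y : H), (inner ℂ (P n x) y : ℂ) = inner ℂ x (P n y))
    (n : ℕ) (x : H) : ‖P n x - x‖ ≤ ‖x‖ := by
  have hidem : P n (P n x) = P n x := by
    have := ContinuousLinearMap.ext_iff.mp (hcomp n n) x
    simpa using this
  have h1 : (inner ℂ x (P n x) : ℂ) = inner ℂ (P n x) (P n x) := by
    rw [hsa n x (P n x), hidem]
  have h2 : RCLike.re (inner ℂ x (P n x) : ℂ) = ‖P n x‖ ^ 2 := by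
    rw [h1, inner_self_eq_norm_sq]
  have h4 : ‖x - P n x‖ ^ 2 = ‖x‖ ^ 2 - 2 * RCLike.re (inner ℂ x (P n x) : ℂ) + ‖P n x‖ ^ 2 :=
    norm_sub_sq (𝕜 := ℂ) x (P n x)
  have h5 : ‖P n x - x‖ ^ 2 ≤ ‖x‖ ^ 2 := by
    rw [norm_sub_rev]
    nlinarith [sq_nonneg (‖P n x‖)]
  nlinarith [norm_nonneg (P n x - x), norm_nonneg x]
end Aux

/-- Boundedness of the commutator `[D, S]` for the Cuntz–Krieger partial isometries of a
Schottky group acting on a tree: if `(Pₙ)` are orthogonal projections with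
`Pₙ ∘ Pₘ = P_{min(n,m)}`, `D` is the associated grading operator (well defined on the union
of the ranges of the `Pₙ`), and `S` satisfies `P_k ∘ S = S ∘ P_{k+1}` for `k ≥ k₀`, then `S`
maps `range P_{m+1}` to `range P_m` for `m ≥ k₀`, and
`‖D(Sx) − S(Dx)‖ ≤ (2k₀+1)‖S‖‖x‖` for `x ∈ range P_N`. -/
theorem commutator_grading_bounded
    {H : Type*} [NormedAddCommGroup H] [InnerProductSpace ℂ H]
    (P : ℕ → H →L[ℂ] H)
    (hcomp : ∀ n m : ℕ, (P n).comp (P m) = P (min n m))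
    (hsa : ∀ (n : ℕ) (x y : H), (inner ℂ (P n x) y : ℂ) = inner ℂ x (P n y))
    (S : H →L[ℂ] H) (k₀ : ℕ)
    (hS : ∀ k : ℕ, k₀ ≤ k → (P k).comp S = S.comp (P (k + 1))) :
    -- `D` is independent of the choice of cutoff:
    (∀ (N N' : ℕ) (x : H), x ∈ Set.range (P N) → x ∈ Set.range (P N') →
      gradingD P N x = gradingD P N' x) ∧
    -- (i) `S` maps the range of `P_{m+1}` into the range of `P_m` for `m ≥ k₀`:
    (∀ m : ℕ, k₀ ≤ m → ∀ x ∈ Set.range (P (m + 1)), S x ∈ Set.range (P m)) ∧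
    -- (ii) the commutator estimate:
    (∀ (N : ℕ), ∀ x ∈ Set.range (P N),
      ‖gradingD P (max N k₀) (S x) - S (gradingD P N x)‖ ≤
        (2 * (k₀ : ℝ) + 1) * ‖S‖ * ‖x‖) := by
  -- basic consequences of `hcomp`
  have happ : ∀ n m (x : H), P n (P m x) = P (min n m) x := by
    intro n m x
    have := ContinuousLinearMap.ext_iff.mp (hcomp n m) x
    simpa using this
  have hfix : ∀ N (x : H), x ∈ Set.range (P N) → P N x = x := by
    rintro N x ⟨y, rfl⟩
    simpa using happ N N y
  have hfix' : ∀ N n (x : H), P N x = x → N ≤ n → P n x = x := by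
    intro N n x hx hNn
    have := happ n N x
    rw [hx, min_eq_right hNn] at this
    rw [this, hx]
  -- formula for gradingD on fixed points
  have hformula : ∀ N (x : H), P N x = x →
      gradingD P N x = (N : ℂ) • x - ∑ n ∈ Finset.range N, P n x := by
    intro N x hx
    rw [gradingD_eq_aux, hx]
  -- independence (one-sided)
  have hindep : ∀ N N' (x : H), P N x = x → N ≤ N' →
      gradingD P N' x = gradingD P N x := by
    intro N N' x hx hNN'
    have hx' : P N' x = x := hfix' N N' x hx hNN'
    rw [hformula N x hx, hformula N' x hx']
    have hsplit : ∑ n ∈ Finset.range N', P n x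
        = (∑ n ∈ Finset.range N, P n x) + ∑ n ∈ Finset.Ico N N', P n x :=
      (Finset.sum_range_add_sum_Ico _ hNN').symm
    have hconst : ∑ n ∈ Finset.Ico N N', P n x = ((N' - N : ℕ) : ℂ) • x := by
      rw [Finset.sum_congr rfl (fun n hn => hfix' N n x hx (Finset.mem_Ico.mp hn).1),
        Finset.sum_const, Nat.card_Ico]
      exact (Nat.cast_smul_eq_nsmul ℂ _ x).symm
    rw [hsplit, hconst]
    have : ((N' : ℂ)) = ((N : ℂ)) + ((N' - N : ℕ) : ℂ) := by
      push_cast [Nat.cast_sub hNN']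
      ring
    rw [this]
    module
  refine ⟨?_, ?_, ?_⟩
  · intro N N' x hx hx'
    rcases le_total N N' with h | h
    · exact (hindep N N' x (hfix N x hx) h).symm
    · exact hindep N' N x (hfix N' x hx') h
  · intro m hm x hx
    have hx' := hfix _ x hx
    refine ⟨S x, ?_⟩
    have := ContinuousLinearMap.ext_iff.mp (hS m hm) x
    simp only [ContinuousLinearMap.coe_comp', Function.comp_apply] at this
    rw [this, hx']
  · intro N x hx
    set M := max N k₀ with hM
    have hNM : N ≤ M := le_max_left _ _
    have hkM : k₀ ≤ M := le_max_right _ _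
    have hxN : P N x = x := hfix N x hx
    have hxM : P M x = x := hfix' N M x hxN hNM
    have hxM1 : P (M + 1) x = x := hfix' N (M + 1) x hxN (hNM.trans (Nat.le_succ M))
    have hSx : P M (S x) = S x := by
      have := ContinuousLinearMap.ext_iff.mp (hS M hkM) x
      simp only [ContinuousLinearMap.coe_comp', Function.comp_apply] at this
      rw [this, hxM1]
    -- commutator rewriting
    have hD1 : gradingD P M (S x) = (M : ℂ) • S x - ∑ n ∈ Finset.range M, P n (S x) :=
      hformula M (S x) hSx
    have hD2 : S (gradingD P N x) = (M : ℂ) • S x - ∑ n ∈ Finset.range M, S (P n x) := by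
      rw [← hindep N M x hxN hNM, hformula M x hxM, map_sub, map_smul, map_sum]
    have hcomm : gradingD P M (S x) - S (gradingD P N x)
        = ∑ n ∈ Finset.range M, (S (P n x) - P n (S x)) := by
      rw [hD1, hD2, Finset.sum_sub_distrib]
      abel
    -- split the sum
    have hsplit : ∑ n ∈ Finset.range M, (S (P n x) - P n (S x))
        = (∑ n ∈ Finset.range k₀, (S (P n x) - P n (S x)))
          + ∑ n ∈ Finset.Ico k₀ M, (S (P n x) - P n (S x)) := by
      exact (Finset.sum_range_add_sum_Ico _ hkM).symm
    -- the tail telescopes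
    have htail : ∑ n ∈ Finset.Ico k₀ M, (S (P n x) - P n (S x))
        = S (P k₀ x) - S x := by
      have hterm : ∀ n ∈ Finset.Ico k₀ M,
          S (P n x) - P n (S x) = S (P n x) - S (P (n + 1) x) := by
        intro n hn
        have hk : k₀ ≤ n := (Finset.mem_Ico.mp hn).1
        have := ContinuousLinearMap.ext_iff.mp (hS n hk) x
        simp only [ContinuousLinearMap.coe_comp', Function.comp_apply] at this
        rw [this]
      rw [Finset.sum_congr rfl hterm]
      have : ∑ n ∈ Finset.Ico k₀ M, (S (P n x) - S (P (n + 1) x))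
          = -(∑ n ∈ Finset.Ico k₀ M, (S (P (n + 1) x) - S (P n x))) := by
        rw [← Finset.sum_neg_distrib]
        exact Finset.sum_congr rfl (fun n _ => by abel)
      rw [this, Finset.sum_Ico_eq_sub _ hkM,
        Finset.sum_range_sub (fun k => S (P k x)) M,
        Finset.sum_range_sub (fun k => S (P k x)) k₀]
      simp only [hxM]
      abel
    rw [hcomm, hsplit, htail]
    have hterm : ∀ n, ‖S (P n x) - P n (S x)‖ ≤ 2 * ‖S‖ * ‖x‖ := by
      intro n
      have h1 : ‖S (P n x)‖ ≤ ‖S‖ * ‖x‖ :=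
        (S.le_opNorm _).trans
          (mul_le_mul_of_nonneg_left (proj_norm_le P hcomp hsa n x) (norm_nonneg S))
      have h2 : ‖P n (S x)‖ ≤ ‖S‖ * ‖x‖ :=
        (proj_norm_le P hcomp hsa n (S x)).trans (S.le_opNorm x)
      calc ‖S (P n x) - P n (S x)‖ ≤ ‖S (P n x)‖ + ‖P n (S x)‖ := norm_sub_le _ _
        _ ≤ 2 * ‖S‖ * ‖x‖ := by linarith
    have hb1 : ‖∑ n ∈ Finset.range k₀, (S (P n x) - P n (S x))‖
        ≤ (k₀ : ℝ) * (2 * ‖S‖ * ‖x‖) := by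
      refine (norm_sum_le _ _).trans ?_
      calc ∑ n ∈ Finset.range k₀, ‖S (P n x) - P n (S x)‖
          ≤ ∑ _n ∈ Finset.range k₀, 2 * ‖S‖ * ‖x‖ :=
            Finset.sum_le_sum fun n _ => hterm n
        _ = (k₀ : ℝ) * (2 * ‖S‖ * ‖x‖) := by
            simp [Finset.sum_const, Finset.card_range, nsmul_eq_mul]
    have hb2 : ‖S (P k₀ x) - S x‖ ≤ ‖S‖ * ‖x‖ := by
      rw [← map_sub]
      exact (S.le_opNorm _).trans
        (mul_le_mul_of_nonneg_left (proj_sub_norm_le P hcomp hsa k₀ x) (norm_nonneg S))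
    refine (norm_add_le _ _).trans ?_
    have : (2 * (k₀ : ℝ) + 1) * ‖S‖ * ‖x‖ = (k₀ : ℝ) * (2 * ‖S‖ * ‖x‖) + ‖S‖ * ‖x‖ := by ring
    linarith
end

section
/- Let H be a complex Hilbert space and (Pₙ)_{n ≥ 0} a sequence of orthogonal projections on H with Pₙ ∘ Pₘ = P_{min(n,m)} for all n, m. Let λ : ℕ → ℝ and, for x in the range of P_N, define D x = ∑_{n=0}^{N} λ(n) · (Pₙ − P_{n−1}) x (convention P_{−1} = 0); this is independent of the choice of N with x ∈ range P_N. Let a : H →L[ℂ] H be a bounded operator and m ∈ ℕ such that a ∘ Pₙ = Pₙ ∘ a for every n ≥ m. Then: (i) for every N ≥ m, a maps the range of P_N into itself; and (ii) for every N and every x in the range of P_N, one has ‖D(a x) − a(D x)‖ ≤ 2 · (∑_{n=0}^{m} |λ(n)|) · ‖a‖ · ‖x‖. -/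
open Finset

private lemma proj_contraction {H : Type*} [NormedAddCommGroup H] [InnerProductSpace ℂ H]
    (Q : H → H) (hidem : ∀ y, Q (Q y) = Q y)
    (hQsa : ∀ x y : H, (inner ℂ (Q x) y : ℂ) = inner ℂ x (Q y)) (y : H) :
    ‖Q y‖ ≤ ‖y‖ := by
  rcases eq_or_lt_of_le (norm_nonneg (Q y)) with h | h
  · rw [← h]; exact norm_nonneg y
  have h1 : (inner ℂ (Q y) (Q y) : ℂ) = inner ℂ y (Q y) := by
    rw [hQsa y (Q y), hidem]
  have h2 : ‖Q y‖ ^ 2 = RCLike.re (inner ℂ y (Q y) : ℂ) := by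
    rw [← h1]; exact (inner_self_eq_norm_sq (Q y)).symm
  have h3 : RCLike.re (inner ℂ y (Q y) : ℂ) ≤ ‖y‖ * ‖Q y‖ :=
    (RCLike.re_le_norm _).trans (norm_inner_le_norm y (Q y))
  nlinarith [h, h2, h3]


/-- The grading operator `D x = ∑_{n=0}^{N} λ(n) (Pₙ − P_{n−1}) x` (convention `P_{−1} = 0`)
associated to an increasing family of projections and an eigenvalue sequence `λ`,
computed using the cutoff `N`. -/
noncomputable def gradingDLam {H : Type*} [NormedAddCommGroup H] [InnerProductSpace ℂ H]
    (lam : ℕ → ℝ) (P : ℕ → H →L[ℂ] H) (N : ℕ) (x : H) : H :=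
  ∑ n ∈ Finset.range (N + 1),
    (lam n : ℂ) • (P n x - if n = 0 then 0 else P (n - 1) x)

/-- Boundedness of the commutator `[D, a]` for an element `a` of a finite-dimensional
subalgebra of an AF algebra: if `(Pₙ)` are orthogonal projections with
`Pₙ ∘ Pₘ = P_{min(n,m)}`, `D` is the grading operator with eigenvalue sequence `λ`
(well defined on the union of the ranges of the `Pₙ`), and `a` commutes with `Pₙ`
for all `n ≥ m`, then `a` maps `range P_N` into itself for `N ≥ m`, and
`‖D(ax) − a(Dx)‖ ≤ 2(∑_{n≤m} |λ n|)‖a‖‖x‖` for `x ∈ range P_N`. -/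
theorem commutator_grading_AF_bounded
    {H : Type*} [NormedAddCommGroup H] [InnerProductSpace ℂ H]
    (P : ℕ → H →L[ℂ] H)
    (hcomp : ∀ n m : ℕ, (P n).comp (P m) = P (min n m))
    (hsa : ∀ (n : ℕ) (x y : H), (inner ℂ (P n x) y : ℂ) = inner ℂ x (P n y))
    (lam : ℕ → ℝ) (a : H →L[ℂ] H) (m : ℕ)
    (ha : ∀ n : ℕ, m ≤ n → a.comp (P n) = (P n).comp a) :
    -- `D` is independent of the choice of cutoff:
    (∀ (N N' : ℕ) (x : H), x ∈ Set.range (P N) → x ∈ Set.range (P N') →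
      gradingDLam lam P N x = gradingDLam lam P N' x) ∧
    -- (i) `a` maps the range of `P_N` into itself for `N ≥ m`:
    (∀ N : ℕ, m ≤ N → ∀ x ∈ Set.range (P N), a x ∈ Set.range (P N)) ∧
    -- (ii) the commutator estimate:
    (∀ (N : ℕ), ∀ x ∈ Set.range (P N),
      ‖gradingDLam lam P (max N m) (a x) - a (gradingDLam lam P N x)‖ ≤
        2 * (∑ n ∈ Finset.range (m + 1), |lam n|) * ‖a‖ * ‖x‖) := by
  -- pointwise form of the composition law
  have hPP : ∀ n k (y : H), P n (P k y) = P (min n k) y := by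
    intro n k y
    have := ContinuousLinearMap.ext_iff.mp (hcomp n k) y
    simpa using this
  -- if x ∈ range (P N) then P n x = x for n ≥ N
  have hfix : ∀ N n (x : H), N ≤ n → x ∈ Set.range (P N) → P n x = x := by
    rintro N n x hNn ⟨z, rfl⟩
    rw [hPP, min_eq_right hNn]
  -- pointwise commutation
  have hca : ∀ n : ℕ, m ≤ n → ∀ y : H, a (P n y) = P n (a y) := by
    intro n hn y
    have := ContinuousLinearMap.ext_iff.mp (ha n hn) y
    simpa using this
  -- the spectral pieces
  set Pi : ℕ → H → H := fun n y => P n y - if n = 0 then 0 else P (n - 1) y with hPi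
  have hPi_idem : ∀ n y, Pi n (Pi n y) = Pi n y := by
    intro n y
    rcases Nat.eq_zero_or_pos n with rfl | hn
    · simp [hPi, hPP]
    · have hn0 : n ≠ 0 := hn.ne'
      have h1 : n - 1 ≤ n := Nat.sub_le n 1
      simp only [hPi, hn0, if_neg, ite_false, map_sub]
      rw [hPP n n, hPP n (n-1), hPP (n-1) n, hPP (n-1) (n-1),
        min_self, min_eq_right h1, min_eq_left h1, min_self]
      abel
  have hPi_sa : ∀ n (x y : H), (inner ℂ (Pi n x) y : ℂ) = inner ℂ x (Pi n y) := by
    intro n x y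
    rcases Nat.eq_zero_or_pos n with rfl | hn
    · simpa [hPi] using hsa 0 x y
    · have hn0 : n ≠ 0 := hn.ne'
      simp only [hPi, hn0, ite_false]
      rw [inner_sub_left, inner_sub_right, hsa n, hsa (n-1)]
  have hPi_le : ∀ n (y : H), ‖Pi n y‖ ≤ ‖y‖ := fun n =>
    proj_contraction (Pi n) (hPi_idem n) (hPi_sa n)
  -- rewriting gradingDLam via Pi
  have hD : ∀ N x, gradingDLam lam P N x
      = ∑ n ∈ Finset.range (N + 1), (lam n : ℂ) • Pi n x := by
    intro N x; rfl
  -- independence of cutoff (monotone version)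
  have hext : ∀ N K (x : H), N ≤ K → x ∈ Set.range (P N) →
      gradingDLam lam P K x = gradingDLam lam P N x := by
    intro N K x hNK hx
    rw [hD, hD]
    refine (Finset.sum_subset (by
      intro n hn
      simp only [Finset.mem_range] at *
      omega) ?_).symm
    intro n hn hn'
    simp only [Finset.mem_range] at hn hn'
    have hn1 : N + 1 ≤ n := by omega
    have hPn : P n x = x := hfix N n x (by omega) hx
    have hPn' : P (n - 1) x = x := hfix N (n - 1) x (by omega) hx
    have hn0 : n ≠ 0 := by omega
    simp [hPi, hn0, hPn, hPn']
  refine ⟨?_, ?_, ?_⟩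
  · -- independence
    intro N N' x hx hx'
    rw [← hext N (max N N') x (le_max_left _ _) hx,
        ← hext N' (max N N') x (le_max_right _ _) hx']
  · -- invariance
    rintro N hN x ⟨z, rfl⟩
    refine ⟨a (P N z), ?_⟩
    rw [← hca N hN, hPP, min_self]
  · -- the estimate
    intro N x hx
    set M := max N m with hM
    have hNM : N ≤ M := le_max_left _ _
    have hmM : m ≤ M := le_max_right _ _
    -- a x ∈ range (P M)
    have hxM : x ∈ Set.range (P M) := by
      obtain ⟨z, rfl⟩ := hx
      exact ⟨P N z, by rw [hPP, min_eq_right hNM]⟩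
    have haxM : a x ∈ Set.range (P M) := by
      obtain ⟨z, rfl⟩ := hxM
      exact ⟨a (P M z), by rw [← hca M hmM, hPP, min_self]⟩
    -- rewrite a (D x) using cutoff M
    rw [← hext N M x hNM hx, hD, hD, map_sum]
    have hasmul : ∀ n : ℕ, a ((lam n : ℂ) • Pi n x) = (lam n : ℂ) • a (Pi n x) :=
      fun n => map_smul a _ _
    simp_rw [hasmul]
    rw [← Finset.sum_sub_distrib]
    -- the terms with n > m vanish
    have hvanish : ∀ n ∈ Finset.range (M + 1), n ∉ Finset.range (m + 1) →
        (lam n : ℂ) • Pi n (a x) - (lam n : ℂ) • a (Pi n x) = 0 := by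
      intro n _ hn'
      have hmn : m + 1 ≤ n := by
        simp only [Finset.mem_range, not_lt] at hn'; omega
      have hn0 : n ≠ 0 := by omega
      have h1 : a (P n x) = P n (a x) := hca n (by omega) x
      have h2 : a (P (n - 1) x) = P (n - 1) (a x) := hca (n - 1) (by omega) x
      have : Pi n (a x) = a (Pi n x) := by
        simp [hPi, hn0, map_sub, h1, h2]
      rw [this, sub_self]
    rw [← Finset.sum_subset (by
      intro n hn; simp only [Finset.mem_range] at *; omega) hvanish]
    -- now estimate the sum over range (m+1)
    calc ‖∑ n ∈ Finset.range (m + 1),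
            ((lam n : ℂ) • Pi n (a x) - (lam n : ℂ) • a (Pi n x))‖
        ≤ ∑ n ∈ Finset.range (m + 1),
            ‖(lam n : ℂ) • Pi n (a x) - (lam n : ℂ) • a (Pi n x)‖ :=
          norm_sum_le _ _
      _ ≤ ∑ n ∈ Finset.range (m + 1), |lam n| * (2 * ‖a‖ * ‖x‖) := by
          refine Finset.sum_le_sum ?_
          intro n _
          have h1 : ‖Pi n (a x)‖ ≤ ‖a‖ * ‖x‖ :=
            (hPi_le n (a x)).trans (a.le_opNorm x)
          have h2 : ‖a (Pi n x)‖ ≤ ‖a‖ * ‖x‖ := by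
            calc ‖a (Pi n x)‖ ≤ ‖a‖ * ‖Pi n x‖ := a.le_opNorm _
              _ ≤ ‖a‖ * ‖x‖ := by
                  exact mul_le_mul_of_nonneg_left (hPi_le n x) (norm_nonneg a)
          calc ‖(lam n : ℂ) • Pi n (a x) - (lam n : ℂ) • a (Pi n x)‖
              = ‖(lam n : ℂ) • (Pi n (a x) - a (Pi n x))‖ := by rw [← smul_sub]
            _ = |lam n| * ‖Pi n (a x) - a (Pi n x)‖ := by
                rw [norm_smul]; simp
            _ ≤ |lam n| * (2 * ‖a‖ * ‖x‖) := by
                refine mul_le_mul_of_nonneg_left ?_ (abs_nonneg _)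
                calc ‖Pi n (a x) - a (Pi n x)‖
                    ≤ ‖Pi n (a x)‖ + ‖a (Pi n x)‖ := norm_sub_le _ _
                  _ ≤ 2 * ‖a‖ * ‖x‖ := by linarith
      _ = 2 * (∑ n ∈ Finset.range (m + 1), |lam n|) * ‖a‖ * ‖x‖ := by
          rw [← Finset.sum_mul]; ring
end

section
/- For an integer r ≥ 1, let G_r be the finite graph obtained from the theta graph (two vertices u, v joined by three parallel edges) by inserting 2r+1 intermediate vertices on each of the three edges, so that G_r has 2 + 3(2r+1) vertices and 3(2r+2) edges, each of the three arcs from u to v being a path of 2r+2 edges. Let A_r be the directed edge matrix of G_r: the square 0–1 matrix of size 6(2r+2) indexed by the oriented edges of G_r, with (A_r)_{e,e'} = 1 if and only if the terminal vertex of e equals the initial vertex of e' and e' is not the orientation-reversal of e. Then, with M = 1 − A_rᵗ acting on ℤ^{6(2r+2)}, the quotient abelian group ℤ^{6(2r+2)} / M(ℤ^{6(2r+2)}) is isomorphic to ℤ × ℤ and the kernel of M is isomorphic to ℤ × ℤ. -/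
open Matrix

/-- Vertices of the graph `G_r`: the two original vertices `u = inl 0`, `v = inl 1` of the
theta graph, together with `2r+1` intermediate vertices on each of the three arcs. -/
abbrev ThetaVtx (r : ℕ) := (Fin 2) ⊕ (Fin 3 × Fin (2 * r + 1))

/-- Unoriented edges of `G_r` with an orientation bit: arc `a ∈ Fin 3`, position
`p ∈ Fin (2r+2)` along the arc, and a direction `Bool` (`true` = from `u` towards `v`).
There are `6(2r+2)` oriented edges. -/
abbrev ThetaEdge (r : ℕ) := Fin 3 × Fin (2 * r + 2) × Bool

/-- The `s`-th vertex along arc `a` (for `0 ≤ s ≤ 2r+2`): `s = 0` is `u`, `s = 2r+2`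
is `v`, and `1 ≤ s ≤ 2r+1` is the `(s−1)`-th intermediate vertex of arc `a`. -/
def thetaVtxAt (r : ℕ) (a : Fin 3) (s : ℕ) : ThetaVtx r :=
  if h0 : s = 0 then Sum.inl 0
  else if h : s ≤ 2 * r + 1 then Sum.inr (a, ⟨s - 1, by omega⟩)
  else Sum.inl 1

/-- Initial vertex of an oriented edge. -/
def thetaSrc (r : ℕ) (e : ThetaEdge r) : ThetaVtx r :=
  if e.2.2 then thetaVtxAt r e.1 e.2.1.val else thetaVtxAt r e.1 (e.2.1.val + 1)

/-- Terminal vertex of an oriented edge. -/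
def thetaTgt (r : ℕ) (e : ThetaEdge r) : ThetaVtx r :=
  if e.2.2 then thetaVtxAt r e.1 (e.2.1.val + 1) else thetaVtxAt r e.1 e.2.1.val

/-- Orientation reversal of an oriented edge. -/
def thetaRev (r : ℕ) (e : ThetaEdge r) : ThetaEdge r := (e.1, e.2.1, !e.2.2)

/-- The directed edge matrix `A_r` of the graph `G_r`: `(A_r)_{e,e'} = 1` iff the terminal
vertex of `e` is the initial vertex of `e'` and `e'` is not the reversal of `e`. -/
def thetaEdgeMatrix (r : ℕ) : Matrix (ThetaEdge r) (ThetaEdge r) ℤ :=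
  fun e e' => if thetaTgt r e = thetaSrc r e' ∧ e' ≠ thetaRev r e then 1 else 0


lemma vtx_eq_iff (r : ℕ) (a a' : Fin 3) (s s' : ℕ) (hs : s ≤ 2*r+2) (hs' : s' ≤ 2*r+2) :
    (thetaVtxAt r a s = thetaVtxAt r a' s') ↔
      ((s = 0 ∧ s' = 0) ∨ (s = 2*r+2 ∧ s' = 2*r+2) ∨ (a = a' ∧ s = s' ∧ 1 ≤ s ∧ s ≤ 2*r+1)) := by
  unfold thetaVtxAt
  split_ifs <;> simp_all [Fin.ext_iff, Prod.ext_iff] <;> omega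

lemma cond_iff (r : ℕ) (e e' : ThetaEdge r) :
    (thetaTgt r e' = thetaSrc r e ∧ e ≠ thetaRev r e') ↔
      ((e'.1 = e.1 ∧ e'.2.2 = e.2.2 ∧
        ((e.2.2 = true ∧ e'.2.1.val + 1 = e.2.1.val) ∨
         (e.2.2 = false ∧ e'.2.1.val = e.2.1.val + 1))) ∨
       (e'.1 ≠ e.1 ∧ e'.2.2 ≠ e.2.2 ∧ e'.2.1.val = e.2.1.val ∧
        ((e.2.2 = true ∧ e.2.1.val = 0) ∨ (e.2.2 = false ∧ e.2.1.val = 2*r+1)))) := by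
  obtain ⟨a, p, b⟩ := e
  obtain ⟨a', p', b'⟩ := e'
  have hp := p.isLt
  have hp' := p'.isLt
  by_cases ha : a' = a
  · subst ha
    cases b <;> cases b' <;>
      simp only [thetaTgt, thetaSrc, thetaRev, Bool.not_true, Bool.not_false,
        Bool.false_eq_true, Bool.true_eq_false, if_true, if_false, ite_true, ite_false] <;>
      rw [vtx_eq_iff r _ _ _ _ (by omega) (by omega)] <;>
      simp [Prod.ext_iff] <;> omega
  · have ha2 : ¬ a = a' := fun h => ha h.symm
    cases b <;> cases b' <;>
      simp only [thetaTgt, thetaSrc, thetaRev, Bool.not_true, Bool.not_false,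
        Bool.false_eq_true, Bool.true_eq_false, if_true, if_false, ite_true, ite_false] <;>
      rw [vtx_eq_iff r _ _ _ _ (by omega) (by omega)] <;>
      simp [Prod.ext_iff, ha, ha2] <;> omega

lemma f3a : ∀ a : Fin 3, a + 1 ≠ a + 2 := by decide
lemma f3b : ∀ a : Fin 3, a + 1 ≠ a := by decide
lemma f3c : ∀ a : Fin 3, a + 2 ≠ a := by decide
lemma fin3_ne : ∀ (a a' : Fin 3), a' ≠ a ↔ (a' = a + 1 ∨ a' = a + 2) := by decide

lemma sum_single {α : Type*} [Fintype α] [DecidableEq α] (f : α → ℤ) (e0 : α)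
    (h : ∀ e, e ≠ e0 → f e = 0) : ∑ e, f e = f e0 :=
  Finset.sum_eq_single e0 (fun b _ hb => h b hb) (fun h' => absurd (Finset.mem_univ e0) h')

lemma sum_pair' {α : Type*} [Fintype α] [DecidableEq α] (f : α → ℤ) (e1 e2 : α)
    (h12 : e1 ≠ e2) (h : ∀ e, e ≠ e1 → e ≠ e2 → f e = 0) : ∑ e, f e = f e1 + f e2 := by
  rw [← Finset.sum_subset (Finset.subset_univ ({e1, e2} : Finset α))
    (fun x _ hx => by
      simp only [Finset.mem_insert, Finset.mem_singleton, not_or] at hx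
      exact h x hx.1 hx.2)]
  exact Finset.sum_pair h12

lemma mulVec_apply (r : ℕ) (x : ThetaEdge r → ℤ) (e : ThetaEdge r) :
    Matrix.mulVecLin (1 - (thetaEdgeMatrix r)ᵀ) x e
      = x e - ∑ e', thetaEdgeMatrix r e' e * x e' := by
  simp [Matrix.mulVecLin_apply, Matrix.mulVec, dotProduct, Matrix.sub_apply,
    Matrix.one_apply, Matrix.transpose_apply, sub_mul, Finset.sum_sub_distrib,
    ite_mul, one_mul, zero_mul, Finset.sum_ite_eq]
  simp [Matrix.vecMul, dotProduct, mul_comm]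

-- case e = (a,p,true), p = 0
lemma sum_t0 (r : ℕ) (x : ThetaEdge r → ℤ) (a : Fin 3) (p : Fin (2*r+2)) (hp : p.val = 0) :
    ∑ e', thetaEdgeMatrix r e' (a,p,true) * x e'
      = x (a+1,p,false) + x (a+2,p,false) := by
  rw [sum_pair' _ (a+1,p,false) (a+2,p,false)
    (fun h => f3a a (congrArg Prod.fst h))]
  · have hv : ∀ a' : Fin 3, a' ≠ a → thetaEdgeMatrix r (a',p,false) (a,p,true) = 1 := by
      intro a' h
      rw [thetaEdgeMatrix, if_pos]
      rw [cond_iff]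
      exact Or.inr ⟨h, by simp, rfl, Or.inl ⟨rfl, hp⟩⟩
    rw [hv _ (f3b a), hv _ (f3c a)]; ring
  · rintro ⟨a',p',b'⟩ h1 h2
    rw [thetaEdgeMatrix, if_neg, zero_mul]
    rw [cond_iff]
    dsimp only
    rintro (⟨-, -, (⟨-, hq⟩ | ⟨hq, -⟩)⟩ | ⟨hne, hb, hq, (⟨-, -⟩ | ⟨hq2, -⟩)⟩)
    · omega
    · exact absurd hq (by simp)
    · simp only [ne_eq, Bool.not_eq_true] at hb
      have hpp : p' = p := Fin.ext (by omega)
      rcases (fin3_ne a a').mp hne with h | h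
      · exact h1 (by simp [h, hpp, hb])
      · exact h2 (by simp [h, hpp, hb])
    · exact absurd hq2 (by simp)

-- case e = (a,p,true), p ≥ 1
lemma sum_tpos (r : ℕ) (x : ThetaEdge r → ℤ) (a : Fin 3) (p : Fin (2*r+2)) (hp : p.val ≠ 0) :
    ∑ e', thetaEdgeMatrix r e' (a,p,true) * x e'
      = x (a, ⟨p.val - 1, by omega⟩, true) := by
  rw [sum_single _ (a, ⟨p.val - 1, by omega⟩, true)]
  · have hv : thetaEdgeMatrix r (a, ⟨p.val - 1, by omega⟩, true) (a,p,true) = 1 := by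
      rw [thetaEdgeMatrix, if_pos]
      rw [cond_iff]
      exact Or.inl ⟨rfl, rfl, Or.inl ⟨rfl, by dsimp only; omega⟩⟩
    rw [hv, one_mul]
  · rintro ⟨a',p',b'⟩ h1
    rw [thetaEdgeMatrix, if_neg, zero_mul]
    rw [cond_iff]
    dsimp only
    rintro (⟨ha, hb, (⟨-, hq⟩ | ⟨hq, -⟩)⟩ | ⟨-, -, -, (⟨-, hq⟩ | ⟨hq, -⟩)⟩)
    · exact h1 (by simp [ha, hb, Fin.ext_iff]; omega)
    · exact absurd hq (by simp)
    · omega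
    · exact absurd hq (by simp)

-- case e = (a,p,false), p ≤ 2r
lemma sum_fmid (r : ℕ) (x : ThetaEdge r → ℤ) (a : Fin 3) (p : Fin (2*r+2))
    (hp : p.val ≠ 2*r+1) :
    ∑ e', thetaEdgeMatrix r e' (a,p,false) * x e'
      = x (a, ⟨p.val + 1, by omega⟩, false) := by
  rw [sum_single _ (a, ⟨p.val + 1, by have := p.isLt; omega⟩, false)]
  · have hv : thetaEdgeMatrix r (a, ⟨p.val + 1, by have := p.isLt; omega⟩, false)
        (a,p,false) = 1 := by
      rw [thetaEdgeMatrix, if_pos]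
      rw [cond_iff]
      exact Or.inl ⟨rfl, rfl, Or.inr ⟨rfl, rfl⟩⟩
    rw [hv, one_mul]
  · rintro ⟨a',p',b'⟩ h1
    rw [thetaEdgeMatrix, if_neg, zero_mul]
    rw [cond_iff]
    dsimp only
    rintro (⟨ha, hb, (⟨hq, -⟩ | ⟨-, hq⟩)⟩ | ⟨-, -, -, (⟨hq, -⟩ | ⟨-, hq⟩)⟩)
    · exact absurd hq (by simp)
    · exact h1 (by simp [ha, hb, Fin.ext_iff]; omega)
    · exact absurd hq (by simp)
    · omega

-- case e = (a,p,false), p = 2r+1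
lemma sum_flast (r : ℕ) (x : ThetaEdge r → ℤ) (a : Fin 3) (p : Fin (2*r+2))
    (hp : p.val = 2*r+1) :
    ∑ e', thetaEdgeMatrix r e' (a,p,false) * x e'
      = x (a+1,p,true) + x (a+2,p,true) := by
  rw [sum_pair' _ (a+1,p,true) (a+2,p,true) (fun h => f3a a (congrArg Prod.fst h))]
  · have hv : ∀ a' : Fin 3, a' ≠ a → thetaEdgeMatrix r (a',p,true) (a,p,false) = 1 := by
      intro a' h
      rw [thetaEdgeMatrix, if_pos]
      rw [cond_iff]
      exact Or.inr ⟨h, by simp, rfl, Or.inr ⟨rfl, hp⟩⟩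
    rw [hv _ (f3b a), hv _ (f3c a)]; ring
  · rintro ⟨a',p',b'⟩ h1 h2
    rw [thetaEdgeMatrix, if_neg, zero_mul]
    rw [cond_iff]
    dsimp only
    rintro (⟨-, -, (⟨hq, -⟩ | ⟨-, hq⟩)⟩ | ⟨hne, hb, hq, (⟨hq2, -⟩ | ⟨-, -⟩)⟩)
    · exact absurd hq (by simp)
    · omega
    · exact absurd hq2 (by simp)
    · simp only [ne_eq, Bool.not_eq_false] at hb
      have hpp : p' = p := Fin.ext (by omega)
      rcases (fin3_ne a a').mp hne with h | h
      · exact h1 (by simp [h, hpp, hb])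
      · exact h2 (by simp [h, hpp, hb])

lemma M_t0 (r : ℕ) (x : ThetaEdge r → ℤ) (a : Fin 3) (p : Fin (2*r+2)) (hp : p.val = 0) :
    Matrix.mulVecLin (1 - (thetaEdgeMatrix r)ᵀ) x (a,p,true)
      = x (a,p,true) - x (a+1,p,false) - x (a+2,p,false) := by
  rw [mulVec_apply, sum_t0 r x a p hp]; ring

lemma M_tpos (r : ℕ) (x : ThetaEdge r → ℤ) (a : Fin 3) (p : Fin (2*r+2)) (hp : p.val ≠ 0) :
    Matrix.mulVecLin (1 - (thetaEdgeMatrix r)ᵀ) x (a,p,true)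
      = x (a,p,true) - x (a, ⟨p.val - 1, by omega⟩, true) := by
  rw [mulVec_apply, sum_tpos r x a p hp]

lemma M_fmid (r : ℕ) (x : ThetaEdge r → ℤ) (a : Fin 3) (p : Fin (2*r+2))
    (hp : p.val ≠ 2*r+1) :
    Matrix.mulVecLin (1 - (thetaEdgeMatrix r)ᵀ) x (a,p,false)
      = x (a,p,false) - x (a, ⟨p.val + 1, by have := p.isLt; omega⟩, false) := by
  rw [mulVec_apply, sum_fmid r x a p hp]

lemma M_flast (r : ℕ) (x : ThetaEdge r → ℤ) (a : Fin 3) (p : Fin (2*r+2))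
    (hp : p.val = 2*r+1) :
    Matrix.mulVecLin (1 - (thetaEdgeMatrix r)ᵀ) x (a,p,false)
      = x (a,p,false) - x (a+1,p,true) - x (a+2,p,true) := by
  rw [mulVec_apply, sum_flast r x a p hp]; ring

/-- The embedding of `ℤ²` into kernel vectors. -/
def kerVec (r : ℕ) : (ℤ × ℤ) →ₗ[ℤ] (ThetaEdge r → ℤ) where
  toFun v := fun e => (if e.2.2 then (-1 : ℤ) else 1) *
    (if e.1 = 0 then v.1 else if e.1 = 1 then v.2 else -v.1 - v.2)
  map_add' v w := by
    funext e
    simp only [Prod.fst_add, Prod.snd_add, Pi.add_apply]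
    split_ifs <;> ring
  map_smul' c v := by
    funext e
    simp only [Prod.smul_fst, Prod.smul_snd, smul_eq_mul, RingHom.id_apply, Pi.smul_apply]
    split_ifs <;> ring

lemma kerVec_mem (r : ℕ) (v : ℤ × ℤ) :
    Matrix.mulVecLin (1 - (thetaEdgeMatrix r)ᵀ) (kerVec r v) = 0 := by
  funext e
  obtain ⟨a, p, b⟩ := e
  have hL := p.isLt
  cases b
  · by_cases hp : p.val = 2*r+1
    · rw [M_flast r _ a p hp]
      simp only [kerVec, LinearMap.coe_mk, AddHom.coe_mk, Pi.zero_apply]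
      fin_cases a <;> simp <;> ring
    · rw [M_fmid r _ a p hp]
      simp only [kerVec, LinearMap.coe_mk, AddHom.coe_mk, Pi.zero_apply]
      ring
  · by_cases hp : p.val = 0
    · rw [M_t0 r _ a p hp]
      simp only [kerVec, LinearMap.coe_mk, AddHom.coe_mk, Pi.zero_apply]
      fin_cases a <;> simp <;> ring
    · rw [M_tpos r _ a p hp]
      simp only [kerVec, LinearMap.coe_mk, AddHom.coe_mk, Pi.zero_apply]
      ring

lemma ker_sub (r : ℕ) (x : ThetaEdge r → ℤ)
    (hx : Matrix.mulVecLin (1 - (thetaEdgeMatrix r)ᵀ) x = 0) :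
    x = kerVec r (x (0, ⟨2*r+1, by omega⟩, false), x (1, ⟨2*r+1, by omega⟩, false)) := by
  have hT : ∀ (a : Fin 3) (k : ℕ) (hk : k < 2*r+2),
      x (a, ⟨k, hk⟩, true) = x (a, ⟨0, by omega⟩, true) := by
    intro a k
    induction k with
    | zero => intro hk; rfl
    | succ n ih =>
      intro hk
      have h := congrFun hx (a, ⟨n+1, hk⟩, true)
      rw [M_tpos r x a ⟨n+1, hk⟩ (by simp)] at h
      simp only [Pi.zero_apply] at h
      have h2 := eq_of_sub_eq_zero h
      rw [h2]
      have h3 : (⟨n+1-1, by omega⟩ : Fin (2*r+2)) = ⟨n, by omega⟩ := Fin.ext (by simp)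
      rw [h3]
      exact ih (by omega)
  have hFaux : ∀ (a : Fin 3) (k : ℕ) (hk : k ≤ 2*r+1),
      x (a, ⟨2*r+1-k, by omega⟩, false) = x (a, ⟨2*r+1, by omega⟩, false) := by
    intro a k
    induction k with
    | zero => intro hk; rfl
    | succ n ih =>
      intro hk
      have h := congrFun hx (a, ⟨2*r+1-(n+1), by omega⟩, false)
      rw [M_fmid r x a ⟨2*r+1-(n+1), by omega⟩ (by simp; omega)] at h
      simp only [Pi.zero_apply] at h
      have h2 := eq_of_sub_eq_zero h
      rw [h2]
      have h3 : (⟨2*r+1-(n+1)+1, by omega⟩ : Fin (2*r+2)) = ⟨2*r+1-n, by omega⟩ := by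
        apply Fin.ext; simp; omega
      rw [h3]
      exact ih (by omega)
  have hF : ∀ (a : Fin 3) (k : ℕ) (hk : k < 2*r+2),
      x (a, ⟨k, hk⟩, false) = x (a, ⟨2*r+1, by omega⟩, false) := by
    intro a k hk
    have h3 : (⟨k, hk⟩ : Fin (2*r+2)) = ⟨2*r+1-(2*r+1-k), by omega⟩ := by
      apply Fin.ext; simp; omega
    rw [h3]
    exact hFaux a (2*r+1-k) (by omega)
  have hA : ∀ a : Fin 3, x (a, ⟨0, by omega⟩, true)
      = x (a+1, ⟨0, by omega⟩, false) + x (a+2, ⟨0, by omega⟩, false) := by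
    intro a
    have h := congrFun hx (a, ⟨0, by omega⟩, true)
    rw [M_t0 r x a _ rfl] at h
    simp only [Pi.zero_apply] at h
    linarith
  have hB : ∀ a : Fin 3, x (a, ⟨2*r+1, by omega⟩, false)
      = x (a+1, ⟨0, by omega⟩, true) + x (a+2, ⟨0, by omega⟩, true) := by
    intro a
    have h := congrFun hx (a, ⟨2*r+1, by omega⟩, false)
    rw [M_flast r x a _ rfl] at h
    simp only [Pi.zero_apply] at h
    have e1 := hT (a+1) (2*r+1) (by omega)
    have e2 := hT (a+2) (2*r+1) (by omega)
    linarith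
  -- instantiate with literal indices
  have c01 : (0:Fin 3)+1 = 1 := by decide
  have c02 : (0:Fin 3)+2 = 2 := by decide
  have c11 : (1:Fin 3)+1 = 2 := by decide
  have c12 : (1:Fin 3)+2 = 0 := by decide
  have c21 : (2:Fin 3)+1 = 0 := by decide
  have c22 : (2:Fin 3)+2 = 1 := by decide
  have hA0 := hA 0; rw [c01, c02] at hA0
  have hA1 := hA 1; rw [c11, c12] at hA1
  have hA2 := hA 2; rw [c21, c22] at hA2
  have hB0 := hB 0; rw [c01, c02] at hB0
  have hB1 := hB 1; rw [c11, c12] at hB1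
  have hB2 := hB 2; rw [c21, c22] at hB2
  have hC0 : x (0, (0 : Fin (2*r+2)), false) = x (0, ⟨2*r+1, by omega⟩, false) := hF 0 0 (by omega)
  have hC1 : x (1, (0 : Fin (2*r+2)), false) = x (1, ⟨2*r+1, by omega⟩, false) := hF 1 0 (by omega)
  have hC2 : x (2, (0 : Fin (2*r+2)), false) = x (2, ⟨2*r+1, by omega⟩, false) := hF 2 0 (by omega)
  simp only [show (⟨0, by omega⟩ : Fin (2*r+2)) = 0 from rfl] at hA0 hA1 hA2 hB0 hB1 hB2
  funext e
  obtain ⟨a, p, b⟩ := e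
  obtain ⟨pv, hpv⟩ := p
  simp only [kerVec, LinearMap.coe_mk, AddHom.coe_mk]
  fin_cases a <;> cases b <;>
    simp only [hT _ pv hpv, hF _ pv hpv] <;> simp <;> linarith

lemma ker_equiv (r : ℕ) :
    Nonempty ((LinearMap.ker (Matrix.mulVecLin (1 - (thetaEdgeMatrix r)ᵀ))) ≃ₗ[ℤ] ℤ × ℤ) := by
  have hinj : Function.Injective (kerVec r) := by
    intro v w h
    have h0 := congrFun h (0, ⟨0, by omega⟩, false)
    have h1 := congrFun h (1, ⟨0, by omega⟩, false)
    simp only [kerVec, LinearMap.coe_mk, AddHom.coe_mk] at h0 h1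
    norm_num at h0 h1
    exact Prod.ext h0 h1
  have hrange : LinearMap.range (kerVec r)
      = LinearMap.ker (Matrix.mulVecLin (1 - (thetaEdgeMatrix r)ᵀ)) := by
    ext x
    simp only [LinearMap.mem_range, LinearMap.mem_ker]
    constructor
    · rintro ⟨v, rfl⟩; exact kerVec_mem r v
    · intro hx; exact ⟨_, (ker_sub r x hx).symm⟩
  exact ⟨((LinearEquiv.ofInjective (kerVec r) hinj).trans
    (LinearEquiv.ofEq _ _ hrange)).symm⟩

/-- Auxiliary totalization of `x` along arc `b`, direction `bl`. -/
def xf (r : ℕ) (x : ThetaEdge r → ℤ) (b : Fin 3) (bl : Bool) (i : ℕ) : ℤ :=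
  x (b, ⟨min i (2*r+1), by omega⟩, bl)

lemma xf_val (r : ℕ) (x : ThetaEdge r → ℤ) (b : Fin 3) (bl : Bool) (q : Fin (2*r+2)) :
    xf r x b bl q.val = x (b, q, bl) := by
  unfold xf
  rw [show (⟨min q.val (2*r+1), by omega⟩ : Fin (2*r+2)) = q from by
    apply Fin.ext; have := q.isLt; simp; omega]

lemma telesc_false (r : ℕ) (x : ThetaEdge r → ℤ) (b : Fin 3) :
    ∑ p : Fin (2*r+2), Matrix.mulVecLin (1 - (thetaEdgeMatrix r)ᵀ) x (b,p,false)
      = x (b, ⟨0, by omega⟩, false) - x (b+1, ⟨2*r+1, by omega⟩, true)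
        - x (b+2, ⟨2*r+1, by omega⟩, true) := by
  rw [Fin.sum_univ_castSucc (n := 2*r+1)]
  have key : ∀ p : Fin (2*r+1),
      Matrix.mulVecLin (1 - (thetaEdgeMatrix r)ᵀ) x (b, Fin.castSucc p, false)
        = xf r x b false p.val - xf r x b false (p.val+1) := by
    intro p
    have hlt := p.isLt
    rw [M_fmid r x b (Fin.castSucc p) (by simp; omega)]
    simp only [Fin.coe_castSucc]
    rw [show x (b, Fin.castSucc p, false) = xf r x b false p.val from by
        have h := xf_val r x b false (Fin.castSucc p)
        simp only [Fin.coe_castSucc] at h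
        exact h.symm,
      show x (b, (⟨p.val+1, by omega⟩ : Fin (2*r+2)), false) = xf r x b false (p.val+1) from
        (xf_val r x b false ⟨p.val+1, by omega⟩).symm]
  rw [Finset.sum_congr rfl (fun p _ => key p)]
  rw [Fin.sum_univ_eq_sum_range (fun i => xf r x b false i - xf r x b false (i+1)) (2*r+1)]
  rw [Finset.sum_range_sub' (fun i => xf r x b false i) (2*r+1)]
  rw [M_flast r x b (Fin.last (2*r+1)) (by simp)]
  rw [show xf r x b false 0 = x (b, ⟨0, by omega⟩, false) from xf_val r x b false ⟨0, by omega⟩]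
  rw [show xf r x b false (2*r+1) = x (b, ⟨2*r+1, by omega⟩, false) from
    xf_val r x b false ⟨2*r+1, by omega⟩]
  rw [show (Fin.last (2*r+1) : Fin (2*r+2)) = ⟨2*r+1, by omega⟩ from by apply Fin.ext; simp]
  ring

lemma telesc_true (r : ℕ) (x : ThetaEdge r → ℤ) (b : Fin 3) :
    ∑ p : Fin (2*r+2), Matrix.mulVecLin (1 - (thetaEdgeMatrix r)ᵀ) x (b,p,true)
      = x (b, ⟨2*r+1, by omega⟩, true) - x (b+1, ⟨0, by omega⟩, false)
        - x (b+2, ⟨0, by omega⟩, false) := by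
  rw [Fin.sum_univ_succ (n := 2*r+1)]
  have key : ∀ p : Fin (2*r+1),
      Matrix.mulVecLin (1 - (thetaEdgeMatrix r)ᵀ) x (b, Fin.succ p, true)
        = xf r x b true (p.val+1) - xf r x b true p.val := by
    intro p
    have hlt := p.isLt
    rw [M_tpos r x b (Fin.succ p) (by simp)]
    simp only [Fin.val_succ, Nat.add_sub_cancel]
    rw [show x (b, Fin.succ p, true) = xf r x b true (p.val+1) from by
        have h := xf_val r x b true (Fin.succ p)
        simp only [Fin.val_succ] at h
        exact h.symm,
      show x (b, (⟨p.val, by omega⟩ : Fin (2*r+2)), true) = xf r x b true p.val from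
        (xf_val r x b true ⟨p.val, by omega⟩).symm]
  rw [Finset.sum_congr rfl (fun p _ => key p)]
  rw [Fin.sum_univ_eq_sum_range (fun i => xf r x b true (i+1) - xf r x b true i) (2*r+1)]
  rw [Finset.sum_range_sub (fun i => xf r x b true i) (2*r+1)]
  rw [M_t0 r x b 0 rfl]
  rw [show xf r x b true 0 = x (b, ⟨0, by omega⟩, true) from xf_val r x b true ⟨0, by omega⟩]
  rw [show xf r x b true (2*r+1) = x (b, ⟨2*r+1, by omega⟩, true) from
    xf_val r x b true ⟨2*r+1, by omega⟩]
  rw [show ((0 : Fin (2*r+2))) = ⟨0, by omega⟩ from rfl]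
  ring

lemma f3d : ∀ b : Fin 3, b+1+1 = b+2 := by decide
lemma f3e : ∀ b : Fin 3, b+1+2 = b := by decide
lemma f3f : ∀ b : Fin 3, b+2+1 = b := by decide
lemma f3g : ∀ b : Fin 3, b+2+2 = b+1 := by decide
lemma f01 : (0:Fin 3)+1 = 1 := by decide
lemma f02 : (0:Fin 3)+2 = 2 := by decide
lemma f11 : (1:Fin 3)+1 = 2 := by decide
lemma f12 : (1:Fin 3)+2 = 0 := by decide
lemma f21 : (2:Fin 3)+1 = 0 := by decide
lemma f22 : (2:Fin 3)+2 = 1 := by decide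

def gfun (r : ℕ) (x : ThetaEdge r → ℤ) (b : Fin 3) : ℤ :=
  (∑ p, x (b,p,false)) + (∑ p, x (b+1,p,true)) + (∑ p, x (b+2,p,true))

def phi (r : ℕ) : (ThetaEdge r → ℤ) →ₗ[ℤ] ℤ × ℤ where
  toFun x := (gfun r x 0 - gfun r x 2, gfun r x 1 - gfun r x 2)
  map_add' x y := by
    simp only [gfun, Pi.add_apply, Finset.sum_add_distrib, Prod.mk_add_mk, Prod.mk.injEq]
    constructor <;> ring
  map_smul' c x := by
    simp only [gfun, Pi.smul_apply, smul_eq_mul, ← Finset.mul_sum, RingHom.id_apply,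
      Prod.smul_mk, smul_eq_mul, Prod.mk.injEq]
    constructor <;> ring

lemma gfun_Mx (r : ℕ) (x : ThetaEdge r → ℤ) (b : Fin 3) :
    gfun r (Matrix.mulVecLin (1 - (thetaEdgeMatrix r)ᵀ) x) b
      = -(x (b, ⟨0, by omega⟩, false) + x (b+1, ⟨0, by omega⟩, false)
          + x (b+2, ⟨0, by omega⟩, false)) := by
  unfold gfun
  rw [telesc_false r x b, telesc_true r x (b+1), telesc_true r x (b+2)]
  rw [f3d, f3e, f3f, f3g]
  ring

lemma phi_Mx (r : ℕ) (x : ThetaEdge r → ℤ) :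
    phi r (Matrix.mulVecLin (1 - (thetaEdgeMatrix r)ᵀ) x) = 0 := by
  simp only [phi, LinearMap.coe_mk, AddHom.coe_mk]
  rw [gfun_Mx r x 0, gfun_Mx r x 1, gfun_Mx r x 2, f01, f02, f11, f12, f21, f22]
  simp only [Prod.mk_eq_zero]
  constructor <;> ring

lemma phi_surj (r : ℕ) : Function.Surjective (phi r) := by
  rintro ⟨m, n⟩
  refine ⟨fun e => if e.2.2 then 0 else if e.2.1.val = 0 then
    (if e.1 = 0 then m else if e.1 = 1 then n else 0) else 0, ?_⟩
  have hsum : ∀ z : ℤ,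
      (∑ p : Fin (2*r+2), (if p.val = 0 then z else 0)) = z := by
    intro z
    rw [sum_single _ ⟨0, by omega⟩ (fun q hq => if_neg (by
      intro h; exact hq (Fin.ext h)))]
    simp
  have hg : ∀ b : Fin 3, gfun r (fun e : ThetaEdge r => if e.2.2 then 0 else
      if e.2.1.val = 0 then (if e.1 = 0 then m else if e.1 = 1 then n else 0) else 0) b
      = (if b = 0 then m else if b = 1 then n else 0) := by
    intro b
    unfold gfun
    simp only [if_true, if_false, Bool.false_eq_true, ite_false, ite_true,
      Finset.sum_const_zero]
    linear_combination hsum (if b = 0 then m else if b = 1 then n else 0)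
  simp only [phi, LinearMap.coe_mk, AddHom.coe_mk]
  rw [hg 0, hg 1, hg 2]
  simp [Fin.ext_iff]

lemma exists_preimage (r : ℕ) (x : ThetaEdge r → ℤ)
    (h0 : gfun r x 0 = gfun r x 2) (h1 : gfun r x 1 = gfun r x 2) :
    ∃ y, Matrix.mulVecLin (1 - (thetaEdgeMatrix r)ᵀ) y = x := by
  refine ⟨fun e => if e.2.2 then
      x (e.1, ⟨0, by omega⟩, true) + (if e.1+1 = 0 then -(gfun r x 0) else 0)
        + (if e.1+2 = 0 then -(gfun r x 0) else 0)
        + ∑ q : Fin (2*r+2), (if 1 ≤ q.val ∧ q.val ≤ e.2.1.val then x (e.1,q,true) else 0)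
    else (if e.1 = 0 then -(gfun r x 0) else 0)
        - ∑ q : Fin (2*r+2), (if q.val < e.2.1.val then x (e.1,q,false) else 0), ?_⟩
  funext e
  obtain ⟨a, p, b⟩ := e
  have hpl := p.isLt
  cases b
  · by_cases hp : p.val = 2*r+1
    · rw [M_flast r _ a p hp]
      dsimp only
      simp only [Bool.false_eq_true, Bool.true_eq_false, if_false, if_true, ite_true, ite_false]
      have hS1 : (∑ q : Fin (2*r+2), (if q.val < p.val then x (a,q,false) else 0))
          = (∑ q : Fin (2*r+2), x (a,q,false)) - x (a,p,false) := by
        rw [Finset.sum_congr rfl (fun q _ => show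
            (if q.val < p.val then x (a,q,false) else 0)
              = x (a,q,false) - (if q = p then x (a,q,false) else 0) from by
          by_cases hq : q = p
          · subst hq; rw [if_neg (by omega), if_pos rfl]; ring
          · have hv : q.val ≠ p.val := fun h => hq (Fin.ext h)
            have := q.isLt
            rw [if_pos (by omega), if_neg hq]; ring)]
        rw [Finset.sum_sub_distrib]
        rw [sum_single (fun q => if q = p then x (a,q,false) else 0) p
          (fun q hq => if_neg hq), if_pos rfl]
      have hS2 : ∀ a' : Fin 3,
          (∑ q : Fin (2*r+2), (if 1 ≤ q.val ∧ q.val ≤ p.val then x (a',q,true) else 0))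
            = (∑ q : Fin (2*r+2), x (a',q,true)) - x (a', ⟨0, by omega⟩, true) := by
        intro a'
        rw [Finset.sum_congr rfl (fun q _ => show
            (if 1 ≤ q.val ∧ q.val ≤ p.val then x (a',q,true) else 0)
              = x (a',q,true) - (if q = ⟨0, by omega⟩ then x (a',q,true) else 0) from by
          by_cases hq : q = (⟨0, by omega⟩ : Fin (2*r+2))
          · subst hq; rw [if_neg (by simp), if_pos rfl]; ring
          · have hv : q.val ≠ 0 := fun h => hq (Fin.ext h)
            have := q.isLt
            rw [if_pos (by omega), if_neg hq]; ring)]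
        rw [Finset.sum_sub_distrib]
        congr 1
        exact (sum_single (fun q : Fin (2*r+2) => if q = ⟨0, by omega⟩ then x (a',q,true) else 0)
          ⟨0, by omega⟩ (fun q hq => if_neg hq)).trans (by rw [if_pos rfl])
      rw [hS1, hS2 (a+1), hS2 (a+2)]
      simp only [f3d, f3e, f3f, f3g]
      have hg : ∀ a : Fin 3, gfun r x a = gfun r x 0 := by
        intro a; fin_cases a
        · rfl
        · exact h1.trans h0.symm
        · exact h0.symm
      have hcsum : ((if a = 0 then -(gfun r x 0) else 0) : ℤ)
          + (if a+1 = 0 then -(gfun r x 0) else 0) + (if a+2 = 0 then -(gfun r x 0) else 0)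
          = -(gfun r x 0) := by
        fin_cases a
        · rw [if_pos (by decide), if_neg (by decide), if_neg (by decide)]; ring
        · rw [if_neg (by decide), if_neg (by decide), if_pos (by decide)]; ring
        · rw [if_neg (by decide), if_pos (by decide), if_neg (by decide)]; ring
      have hgs : (∑ q : Fin (2*r+2), x (a,q,false)) + (∑ q : Fin (2*r+2), x (a+1,q,true))
          + (∑ q : Fin (2*r+2), x (a+2,q,true)) = gfun r x 0 := by
        rw [← hg a]; rfl
      linarith [hcsum, hgs]
    · rw [M_fmid r _ a p hp]
      dsimp only
      simp only [Bool.false_eq_true, Bool.true_eq_false, if_false, if_true, ite_true, ite_false]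
      have key : ∀ q : Fin (2*r+2),
          (if q.val < p.val+1 then x (a,q,false) else 0)
            - (if q.val < p.val then x (a,q,false) else 0)
          = (if q = p then x (a,q,false) else 0) := by
        intro q
        by_cases hq : q = p
        · subst hq; rw [if_pos (by omega), if_neg (by omega), if_pos rfl]; ring
        · have hv : q.val ≠ p.val := fun h => hq (Fin.ext h)
          rw [if_neg hq]
          by_cases h2 : q.val < p.val
          · rw [if_pos (by omega), if_pos h2]; ring
          · rw [if_neg (by omega), if_neg h2]; ring
      have hd : (∑ q : Fin (2*r+2), (if q.val < p.val+1 then x (a,q,false) else 0))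
          - (∑ q : Fin (2*r+2), (if q.val < p.val then x (a,q,false) else 0))
          = x (a,p,false) := by
        rw [← Finset.sum_sub_distrib, Finset.sum_congr rfl (fun q _ => key q),
          sum_single (fun q => if q = p then x (a,q,false) else 0) p
            (fun q hq => if_neg hq), if_pos rfl]
      linarith [hd]
  · by_cases hp : p.val = 0
    · rw [M_t0 r _ a p hp]
      dsimp only
      simp only [Bool.false_eq_true, Bool.true_eq_false, if_false, if_true, ite_true, ite_false]
      have z1 : (∑ q : Fin (2*r+2), (if 1 ≤ q.val ∧ q.val ≤ p.val then x (a,q,true) else 0))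
          = 0 := Finset.sum_eq_zero (fun q _ => if_neg (by omega))
      have z2 : ∀ a' : Fin 3,
          (∑ q : Fin (2*r+2), (if q.val < p.val then x (a',q,false) else 0)) = 0 :=
        fun a' => Finset.sum_eq_zero (fun q _ => if_neg (by omega))
      have hp' : (⟨0, by omega⟩ : Fin (2*r+2)) = p := by apply Fin.ext; simp [hp]
      rw [hp', z1, z2 (a+1), z2 (a+2)]
      ring
    · rw [M_tpos r _ a p hp]
      dsimp only
      simp only [Bool.false_eq_true, Bool.true_eq_false, if_false, if_true, ite_true, ite_false]
      have key : ∀ q : Fin (2*r+2),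
          (if 1 ≤ q.val ∧ q.val ≤ p.val then x (a,q,true) else 0)
            - (if 1 ≤ q.val ∧ q.val ≤ p.val - 1 then x (a,q,true) else 0)
          = (if q = p then x (a,q,true) else 0) := by
        intro q
        by_cases hq : q = p
        · subst hq; rw [if_pos (by omega), if_neg (by omega), if_pos rfl]; ring
        · have hv : q.val ≠ p.val := fun h => hq (Fin.ext h)
          rw [if_neg hq]
          by_cases h2 : 1 ≤ q.val ∧ q.val ≤ p.val - 1
          · rw [if_pos (by omega), if_pos h2]; ring
          · rw [if_neg (by omega), if_neg h2]; ring
      have hd : (∑ q : Fin (2*r+2), (if 1 ≤ q.val ∧ q.val ≤ p.val then x (a,q,true) else 0))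
          - (∑ q : Fin (2*r+2), (if 1 ≤ q.val ∧ q.val ≤ p.val - 1 then x (a,q,true) else 0))
          = x (a,p,true) := by
        rw [← Finset.sum_sub_distrib, Finset.sum_congr rfl (fun q _ => key q),
          sum_single (fun q => if q = p then x (a,q,true) else 0) p
            (fun q hq => if_neg hq), if_pos rfl]
      linarith [hd]

lemma coker_equiv (r : ℕ) :
    Nonempty (((ThetaEdge r → ℤ) ⧸
        LinearMap.range (Matrix.mulVecLin (1 - (thetaEdgeMatrix r)ᵀ))) ≃ₗ[ℤ] ℤ × ℤ) := by
  have hker : LinearMap.range (Matrix.mulVecLin (1 - (thetaEdgeMatrix r)ᵀ))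
      = LinearMap.ker (phi r) := by
    ext x
    simp only [LinearMap.mem_range, LinearMap.mem_ker]
    constructor
    · rintro ⟨y, rfl⟩; exact phi_Mx r y
    · intro hx
      have e0 : gfun r x 0 - gfun r x 2 = 0 := congrArg Prod.fst hx
      have e1 : gfun r x 1 - gfun r x 2 = 0 := congrArg Prod.snd hx
      exact exists_preimage r x (by linarith) (by linarith)
  exact ⟨(Submodule.quotEquivOfEq _ _ hker).trans
    ((phi r).quotKerEquivOfSurjective (phi_surj r))⟩

/-- K-theory computation for Kato's family: the graph `G_r` has `6(2r+2)` oriented edges,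
and with `M = 1 − A_rᵗ` acting on `ℤ^{6(2r+2)}`, the cokernel and kernel of `M` are both
isomorphic to `ℤ × ℤ`. -/
theorem ktheory_kato_family (r : ℕ) (hr : 1 ≤ r) :
    Fintype.card (ThetaEdge r) = 6 * (2 * r + 2) ∧
    Nonempty (((ThetaEdge r → ℤ) ⧸
        LinearMap.range (Matrix.mulVecLin (1 - (thetaEdgeMatrix r)ᵀ))) ≃ₗ[ℤ] ℤ × ℤ) ∧
    Nonempty ((LinearMap.ker (Matrix.mulVecLin (1 - (thetaEdgeMatrix r)ᵀ))) ≃ₗ[ℤ] ℤ × ℤ) := by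
  refine ⟨?_, coker_equiv r, ker_equiv r⟩
  simp only [ThetaEdge, Fintype.card_prod, Fintype.card_fin, Fintype.card_bool]
  ring
end

section
/- Let μ : ℕ → ℝ, and let p ≥ 0 and C > 0 be real numbers such that for every real R ≥ 1 the set {n ∈ ℕ : |μ(n)| ≤ R} is finite with cardinality at most C · R^p. Then for every real R ≥ 1 the set {(n, k) ∈ ℕ × ℤ : μ(n)² + k² ≤ R²} is finite with cardinality at most 3C · R^{p+1}. -/
/-- Eigenvalue-counting estimate for the degree shift `p → p + 1` in the crossed product
construction: if for every `R ≥ 1` the set `{n : |μ n| ≤ R}` is finite of cardinality at most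
`C·R^p`, then for every `R ≥ 1` the set `{(n,k) : μ(n)² + k² ≤ R²}` is finite of cardinality
at most `3C·R^(p+1)`. -/
theorem eigenvalue_count_shift (μ : ℕ → ℝ) (p C : ℝ) (hp : 0 ≤ p) (hC : 0 < C)
    (h : ∀ R : ℝ, 1 ≤ R →
      {n : ℕ | |μ n| ≤ R}.Finite ∧ (Nat.card {n : ℕ | |μ n| ≤ R} : ℝ) ≤ C * R ^ p) :
    ∀ R : ℝ, 1 ≤ R →
      {z : ℕ × ℤ | μ z.1 ^ 2 + (z.2 : ℝ) ^ 2 ≤ R ^ 2}.Finite ∧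
      (Nat.card {z : ℕ × ℤ | μ z.1 ^ 2 + (z.2 : ℝ) ^ 2 ≤ R ^ 2} : ℝ) ≤
        3 * C * R ^ (p + 1) := by
  intro R hR
  have hR0 : (0:ℝ) < R := lt_of_lt_of_le one_pos hR
  obtain ⟨hAfin, hAcard⟩ := h R hR
  set A := {n : ℕ | |μ n| ≤ R} with hA
  set K := {k : ℤ | |(k:ℝ)| ≤ R} with hKdef
  have hKeq : K = ↑(Finset.Icc (-⌊R⌋) ⌊R⌋) := by
    ext k
    simp only [hKdef, Set.mem_setOf_eq, Finset.coe_Icc, Set.mem_Icc, abs_le]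
    constructor
    · rintro ⟨h1, h2⟩
      refine ⟨?_, Int.le_floor.mpr h2⟩
      have : (-k : ℤ) ≤ ⌊R⌋ := Int.le_floor.mpr (by push_cast; linarith)
      omega
    · rintro ⟨h1, h2⟩
      have hf := Int.floor_le R
      constructor
      · have : ((-k : ℤ) : ℝ) ≤ (⌊R⌋ : ℝ) := by exact_mod_cast (by omega : (-k : ℤ) ≤ ⌊R⌋)
        push_cast at this; linarith
      · have : (k : ℝ) ≤ (⌊R⌋ : ℝ) := by exact_mod_cast h2
        linarith
  have hKfin : K.Finite := by rw [hKeq]; exact (Finset.Icc _ _).finite_toSet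
  have hsub : {z : ℕ × ℤ | μ z.1 ^ 2 + (z.2 : ℝ) ^ 2 ≤ R ^ 2} ⊆ A ×ˢ K := by
    rintro ⟨n, k⟩ hz
    simp only [Set.mem_setOf_eq] at hz
    have h1 : |μ n| ≤ R := by nlinarith [abs_nonneg (μ n), sq_abs (μ n), sq_nonneg ((k:ℝ))]
    have h2 : |(k : ℝ)| ≤ R := by nlinarith [abs_nonneg ((k:ℝ)), sq_abs ((k:ℝ)), sq_nonneg (μ n)]
    exact ⟨h1, h2⟩
  have hfin : {z : ℕ × ℤ | μ z.1 ^ 2 + (z.2 : ℝ) ^ 2 ≤ R ^ 2}.Finite :=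
    (hAfin.prod hKfin).subset hsub
  refine ⟨hfin, ?_⟩
  have hcard1 : Nat.card {z : ℕ × ℤ | μ z.1 ^ 2 + (z.2 : ℝ) ^ 2 ≤ R ^ 2}
      ≤ Nat.card (A ×ˢ K : Set (ℕ × ℤ)) := Nat.card_mono (hAfin.prod hKfin).to_subtype hsub
  have hcard2 : Nat.card (A ×ˢ K : Set (ℕ × ℤ)) = Nat.card A * Nat.card K := by
    rw [Nat.card_congr (Equiv.Set.prod A K), Nat.card_prod]
  have hKcard : (Nat.card K : ℝ) ≤ 2 * R + 1 := by
    have : Nat.card K = (Finset.Icc (-⌊R⌋) ⌊R⌋).card := by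
      rw [hKeq, Nat.card_coe_set_eq, Set.ncard_coe_finset]
    rw [this, Int.card_Icc]
    have h1 : (1:ℤ) ≤ ⌊R⌋ := Int.le_floor.mpr (by simpa using hR)
    have h2 : (⌊R⌋ + 1 - -⌊R⌋).toNat = (2 * ⌊R⌋ + 1).toNat := by ring_nf
    rw [h2]
    have h3 : ((2 * ⌊R⌋ + 1).toNat : ℝ) = 2 * (⌊R⌋ : ℝ) + 1 := by
      have : ((2 * ⌊R⌋ + 1).toNat : ℤ) = 2 * ⌊R⌋ + 1 := Int.toNat_of_nonneg (by omega)
      exact_mod_cast this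
    rw [h3]
    have := Int.floor_le R
    linarith
  have hrpow : R ^ (p + 1) = R ^ p * R := by
    rw [Real.rpow_add hR0, Real.rpow_one]
  have hApos : (0:ℝ) < R ^ p := Real.rpow_pos_of_pos hR0 p
  have hAcard' : (0:ℝ) ≤ (Nat.card A : ℝ) := Nat.cast_nonneg _
  calc (Nat.card {z : ℕ × ℤ | μ z.1 ^ 2 + (z.2 : ℝ) ^ 2 ≤ R ^ 2} : ℝ)
      ≤ (Nat.card A : ℝ) * (Nat.card K : ℝ) := by
        rw [← Nat.cast_mul, ← hcard2]; exact_mod_cast hcard1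
    _ ≤ (C * R ^ p) * (2 * R + 1) := by
        apply mul_le_mul hAcard hKcard (Nat.cast_nonneg _) (by positivity)
    _ ≤ 3 * C * R ^ (p + 1) := by rw [hrpow]; nlinarith
end
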